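/- arXiv:2102.03960 — 7 statements merged into one kernel-verified Lean document; each statement's English description precedes it below -/
import Mathlib

section
/- Let G be a connected simple graph on n vertices with m edges, maximum degree Δ and minimum degree δ. Then 2√2·m·δ/n ≤ ρ_1 ≤ Δ·√(4m − 2n + 2), where ρ_1 is the Sombor spectral radius. Equality in the lower bound holds if and only if G is regular, and equality in the upper bound holds if and only if G is the complete graph K_n. -/
open scoped Classical

noncomputable def somborMatrix {V : Type*} [Fintype V] (G : SimpleGraph V) :
    Matrix V V ℝ := fun i j =>
  if G.Adj i j then Real.sqrt ((G.degree i : ℝ) ^ 2 + (G.degree j : ℝ) ^ 2) else 0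

lemma somborMatrix_isHermitian {V : Type*} [Fintype V] (G : SimpleGraph V) :
    (somborMatrix G).IsHermitian := by
  apply Matrix.ext
  intro i j
  simp only [Matrix.conjTranspose_apply, star_trivial, somborMatrix]
  rw [G.adj_comm, add_comm]

/-- The Sombor eigenvalues of `G`. -/
noncomputable def somborEigs {V : Type*} [Fintype V] (G : SimpleGraph V) : V → ℝ :=
  (somborMatrix_isHermitian G).eigenvalues

/-- The Sombor spectral radius (largest Sombor eigenvalue). -/
noncomputable def somborSpecRad {V : Type*} [Fintype V] (G : SimpleGraph V) : ℝ :=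
  ⨆ i, somborEigs G i

/-- The Sombor energy. -/
noncomputable def somborEnergy {V : Type*} [Fintype V] (G : SimpleGraph V) : ℝ :=
  ∑ i, |somborEigs G i|

/-- The Sombor Estrada index. -/
noncomputable def somborEstrada {V : Type*} [Fintype V] (G : SimpleGraph V) : ℝ :=
  ∑ i, Real.exp (somborEigs G i)

/-- The forgotten topological index `F = ∑ d_i ^ 3`. -/
noncomputable def forgottenIndex {V : Type*} [Fintype V] (G : SimpleGraph V) : ℝ :=
  ∑ i, (G.degree i : ℝ) ^ 3

/-! The Rayleigh quotient of the all-ones vector gives `n ρ₁ ≥ ∑ᵢⱼ Sᵢⱼ`, and every nonzero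
entry `√(dᵢ² + dⱼ²)` is at least `√2 δ`; in the equality case every entry equals `√2 δ`, so every
degree is `δ`. Conversely, for a `k`-regular graph the lower bound is `√2 k²`, the common row sum
of `S`, and a row sum at a vertex maximising `|v|` for an eigenvector `v` bounds `ρ₁` from above.

The same argument applied to `S²` gives `ρ₁² ≤ (S² 𝟙) u = ∑_{k ~ u} S u k (S 𝟙) k
≤ 2Δ² ∑_{k ~ u} d_k`, which is at most `2Δ² (2m - n + 1)` because in a connected graph every
vertex outside the closed neighbourhood of `u` has degree at least `1`. At equality, every vertex
at distance two from `u` again maximises `|v|`, the neighbours of `u` have degree `Δ` and its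
non-neighbours degree `1`. A vertex at distance two would thus have degree `Δ = 1`, impossible
for the vertex in between, so `u` is adjacent to everything, `Δ = n - 1`, and `G` is complete. -/

open Matrix Finset

namespace Matrix

variable {ι : Type*} [Fintype ι]

theorem IsHermitian.dotProduct_mulVec_le [DecidableEq ι] {A : Matrix ι ι ℝ}
    (hA : A.IsHermitian) {c : ℝ} (hc : ∀ i, hA.eigenvalues i ≤ c) (x : ι → ℝ) :
    x ⬝ᵥ A *ᵥ x ≤ c * (x ⬝ᵥ x) := by
  set U : Matrix ι ι ℝ := (hA.eigenvectorUnitary : Matrix ι ι ℝ)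
  set y : ι → ℝ := star U *ᵥ x with hy
  have hdot : ∀ w : ι → ℝ, x ⬝ᵥ U *ᵥ w = y ⬝ᵥ w := fun w => by
    rw [dotProduct_mulVec, hy, star_eq_conjTranspose, conjTranspose_eq_transpose_of_trivial,
      mulVec_transpose]
  have hquad : x ⬝ᵥ A *ᵥ x = ∑ i, hA.eigenvalues i * y i ^ 2 := by
    conv_lhs => rw [hA.spectral_theorem, Unitary.conjStarAlgAut_apply]
    rw [← mulVec_mulVec, ← mulVec_mulVec, hdot]
    simp only [dotProduct, mulVec_diagonal, Function.comp_apply, RCLike.ofReal_real_eq_id, id]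
    exact Finset.sum_congr rfl fun i _ => by ring
  have hnorm : y ⬝ᵥ y = x ⬝ᵥ x := by
    rw [hy, ← hdot, mulVec_mulVec, mem_unitaryGroup_iff.mp hA.eigenvectorUnitary.2, one_mulVec]
  rw [hquad, ← hnorm, dotProduct, Finset.mul_sum]
  exact Finset.sum_le_sum fun i _ => by
    rw [← sq]; exact mul_le_mul_of_nonneg_right (hc i) (sq_nonneg _)

theorem IsHermitian.exists_mulVec_eq_iSup_eigenvalues_smul [DecidableEq ι] [Nonempty ι]
    {A : Matrix ι ι ℝ} (hA : A.IsHermitian) :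
    ∃ v : ι → ℝ, v ≠ 0 ∧ A *ᵥ v = (⨆ i, hA.eigenvalues i) • v := by
  obtain ⟨i, hi⟩ := Finite.exists_max hA.eigenvalues
  have hsup : ⨆ j, hA.eigenvalues j = hA.eigenvalues i :=
    le_antisymm (ciSup_le hi) (le_ciSup (Set.finite_range _).bddAbove i)
  refine ⟨⇑(hA.eigenvectorBasis i), fun h => hA.eigenvectorBasis.orthonormal.ne_zero i ?_, ?_⟩
  · ext j; exact congrFun h j
  · rw [hsup]; exact hA.mulVec_eigenvectorBasis i

theorem mul_self_mulVec_eq_sq_smul {R : Type*} [CommSemiring R] {A : Matrix ι ι R} {v : ι → R}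
    {μ : R} (hv : A *ᵥ v = μ • v) : (A * A) *ᵥ v = μ ^ 2 • v := by
  rw [← mulVec_mulVec, hv, mulVec_smul, hv, smul_smul, sq]

variable {B : Matrix ι ι ℝ} {v : ι → ℝ} {μ : ℝ}

theorem sum_mul_abs_sub_le_of_mulVec_eq_smul (hB : ∀ i j, 0 ≤ B i j) (hv : B *ᵥ v = μ • v)
    (u : ι) : ∑ j, B u j * (|v u| - |v j|) ≤ ((B *ᵥ 1) u - |μ|) * |v u| := by
  have h : |μ| * |v u| ≤ ∑ j, B u j * |v j| := by
    calc |μ| * |v u| = |∑ j, B u j * v j| := by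
          rw [← abs_mul, ← smul_eq_mul, ← Pi.smul_apply, ← hv]; rfl
      _ ≤ ∑ j, |B u j * v j| := Finset.abs_sum_le_sum_abs _ _
      _ = ∑ j, B u j * |v j| := by simp only [abs_mul, abs_of_nonneg (hB _ _)]
  simp only [mulVec, dotProduct_one, mul_sub, Finset.sum_sub_distrib, sub_mul, Finset.sum_mul]
  linarith

theorem abs_le_mulVec_one_of_mulVec_eq_smul (hB : ∀ i j, 0 ≤ B i j) (hv : B *ᵥ v = μ • v)
    {u : ι} (hu : ∀ j, |v j| ≤ |v u|) (hvu : v u ≠ 0) : |μ| ≤ (B *ᵥ 1) u := by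
  have h := sum_mul_abs_sub_le_of_mulVec_eq_smul hB hv u
  have hterms : 0 ≤ ∑ j, B u j * (|v u| - |v j|) :=
    Finset.sum_nonneg fun j _ => mul_nonneg (hB u j) (sub_nonneg.mpr (hu j))
  exact sub_nonneg.mp (nonneg_of_mul_nonneg_left (hterms.trans h) (abs_pos.mpr hvu))

theorem abs_eq_of_mulVec_eq_smul_of_abs_eq (hB : ∀ i j, 0 ≤ B i j) (hv : B *ᵥ v = μ • v)
    {u : ι} (hu : ∀ j, |v j| ≤ |v u|) (hμ : |μ| = (B *ᵥ 1) u) {j : ι} (hj : 0 < B u j) :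
    |v j| = |v u| := by
  have h := sum_mul_abs_sub_le_of_mulVec_eq_smul hB hv u
  rw [hμ, sub_self, zero_mul] at h
  have hterms : ∀ k ∈ Finset.univ, 0 ≤ B u k * (|v u| - |v k|) :=
    fun k _ => mul_nonneg (hB u k) (sub_nonneg.mpr (hu k))
  have hj0 := (Finset.sum_eq_zero_iff_of_nonneg hterms).mp
    (le_antisymm h (Finset.sum_nonneg hterms)) j (Finset.mem_univ j)
  linarith [(mul_eq_zero.mp hj0).resolve_left hj.ne']

end Matrix

section SqrtSumSq

variable {a b c : ℝ}

theorem sqrt_two_mul_eq_sqrt_sq_add_sq (hc : 0 ≤ c) : √2 * c = √(c ^ 2 + c ^ 2) := by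
  rw [← two_mul, Real.sqrt_mul zero_le_two, Real.sqrt_sq hc]

theorem sqrt_sq_add_sq_le (ha : 0 ≤ a) (hb : 0 ≤ b) (hac : a ≤ c) (hbc : b ≤ c) :
    √(a ^ 2 + b ^ 2) ≤ √2 * c := by
  rw [sqrt_two_mul_eq_sqrt_sq_add_sq (ha.trans hac)]
  exact Real.sqrt_le_sqrt (by nlinarith)

theorem eq_of_sqrt_sq_add_sq_eq (ha : 0 ≤ a) (hb : 0 ≤ b) (hac : a ≤ c) (hbc : b ≤ c)
    (h : √(a ^ 2 + b ^ 2) = √2 * c) : a = c ∧ b = c := by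
  rw [sqrt_two_mul_eq_sqrt_sq_add_sq (ha.trans hac), Real.sqrt_inj (by positivity) (by positivity)]
    at h
  constructor <;> nlinarith

theorem sqrt_two_mul_le_sqrt_sq_add_sq (hc : 0 ≤ c) (hca : c ≤ a) (hcb : c ≤ b) :
    √2 * c ≤ √(a ^ 2 + b ^ 2) := by
  rw [sqrt_two_mul_eq_sqrt_sq_add_sq hc]
  exact Real.sqrt_le_sqrt (by nlinarith)

theorem eq_of_sqrt_two_mul_eq_sqrt_sq_add_sq (hc : 0 ≤ c) (hca : c ≤ a) (hcb : c ≤ b)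
    (h : √2 * c = √(a ^ 2 + b ^ 2)) : a = c := by
  rw [sqrt_two_mul_eq_sqrt_sq_add_sq hc, Real.sqrt_inj (by positivity) (by positivity)] at h
  nlinarith

end SqrtSumSq

section SomborMatrix

variable {V : Type*} [Fintype V] (G : SimpleGraph V)

local notation "S" => somborMatrix G
local notation "Δ" => (G.maxDegree : ℝ)
local notation "δ" => (G.minDegree : ℝ)

theorem somborMatrix_apply_of_adj {i j : V} (h : G.Adj i j) :
    S i j = √((G.degree i : ℝ) ^ 2 + (G.degree j : ℝ) ^ 2) :=
  if_pos h

theorem somborMatrix_apply_of_not_adj {i j : V} (h : ¬G.Adj i j) : S i j = 0 :=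
  if_neg h

theorem somborMatrix_nonneg (i j : V) : 0 ≤ S i j := by
  unfold somborMatrix; split_ifs <;> positivity

theorem somborMatrix_pos {i j : V} (h : G.Adj i j) : 0 < S i j := by
  have hi : (0 : ℝ) < G.degree i := Nat.cast_pos.mpr h.degree_pos_left
  rw [somborMatrix_apply_of_adj G h]
  positivity

theorem somborMatrix_le (i j : V) : S i j ≤ √2 * Δ := by
  by_cases h : G.Adj i j
  · rw [somborMatrix_apply_of_adj G h]
    exact sqrt_sq_add_sq_le (Nat.cast_nonneg _) (Nat.cast_nonneg _)
      (Nat.cast_le.mpr (G.degree_le_maxDegree i)) (Nat.cast_le.mpr (G.degree_le_maxDegree j))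
  · rw [somborMatrix_apply_of_not_adj G h]; positivity

theorem degree_eq_maxDegree_of_somborMatrix_eq {i j : V} (h : G.Adj i j)
    (heq : S i j = √2 * Δ) : G.degree i = G.maxDegree ∧ G.degree j = G.maxDegree := by
  rw [somborMatrix_apply_of_adj G h] at heq
  have := eq_of_sqrt_sq_add_sq_eq (Nat.cast_nonneg _) (Nat.cast_nonneg _)
    (Nat.cast_le.mpr (G.degree_le_maxDegree i)) (Nat.cast_le.mpr (G.degree_le_maxDegree j)) heq
  exact_mod_cast this

theorem sqrt_two_mul_minDegree_le_somborMatrix {i j : V} (h : G.Adj i j) : √2 * δ ≤ S i j := by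
  rw [somborMatrix_apply_of_adj G h]
  exact sqrt_two_mul_le_sqrt_sq_add_sq (Nat.cast_nonneg _)
    (Nat.cast_le.mpr (G.minDegree_le_degree i)) (Nat.cast_le.mpr (G.minDegree_le_degree j))

theorem degree_eq_minDegree_of_somborMatrix_eq {i j : V} (h : G.Adj i j)
    (heq : S i j = √2 * δ) : G.degree i = G.minDegree := by
  rw [somborMatrix_apply_of_adj G h] at heq
  exact_mod_cast eq_of_sqrt_two_mul_eq_sqrt_sq_add_sq (Nat.cast_nonneg _)
    (Nat.cast_le.mpr (G.minDegree_le_degree i)) (Nat.cast_le.mpr (G.minDegree_le_degree j))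
    heq.symm

theorem somborMatrix_mulVec_apply (w : V → ℝ) (i : V) :
    (S *ᵥ w) i = ∑ j ∈ G.neighborFinset i, S i j * w j := by
  rw [mulVec, dotProduct, ← Finset.sum_subset (Finset.subset_univ _)]
  intro j _ hj
  rw [somborMatrix_apply_of_not_adj G ((G.mem_neighborFinset i j).not.mp hj), zero_mul]

theorem somborMatrix_mulVec_one_apply (i : V) :
    (S *ᵥ 1) i = ∑ j ∈ G.neighborFinset i, S i j := by
  simp only [somborMatrix_mulVec_apply, Pi.one_apply, mul_one]

theorem somborMatrix_mulVec_one_le (i : V) : (S *ᵥ 1) i ≤ √2 * Δ * G.degree i := by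
  calc (S *ᵥ 1) i ≤ ∑ _j ∈ G.neighborFinset i, √2 * Δ := by
        rw [somborMatrix_mulVec_one_apply]
        exact Finset.sum_le_sum fun j _ => somborMatrix_le G i j
    _ = √2 * Δ * G.degree i := by
        rw [Finset.sum_const, G.card_neighborFinset_eq_degree, nsmul_eq_mul, mul_comm]

theorem sqrt_two_mul_minDegree_mul_degree_le_somborMatrix_mulVec_one (i : V) :
    √2 * δ * G.degree i ≤ (S *ᵥ 1) i := by
  calc √2 * δ * G.degree i = ∑ _j ∈ G.neighborFinset i, √2 * δ := by
        rw [Finset.sum_const, G.card_neighborFinset_eq_degree, nsmul_eq_mul, mul_comm]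
    _ ≤ (S *ᵥ 1) i := by
        rw [somborMatrix_mulVec_one_apply]
        exact Finset.sum_le_sum fun j hj =>
          sqrt_two_mul_minDegree_le_somborMatrix G ((G.mem_neighborFinset i j).mp hj)

theorem degree_eq_minDegree_of_somborMatrix_mulVec_one_eq {i : V}
    (h : (S *ᵥ 1) i = √2 * δ * G.degree i) : G.degree i = G.minDegree := by
  obtain ⟨j, hj⟩ | hiso := em (∃ j, G.Adj i j)
  · refine degree_eq_minDegree_of_somborMatrix_eq G hj ?_
    have hle : ∀ k ∈ G.neighborFinset i, √2 * δ ≤ S i k := fun k hk =>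
      sqrt_two_mul_minDegree_le_somborMatrix G ((G.mem_neighborFinset i k).mp hk)
    have hsum : ∑ _k ∈ G.neighborFinset i, √2 * δ = ∑ k ∈ G.neighborFinset i, S i k := by
      rw [← somborMatrix_mulVec_one_apply, h, Finset.sum_const, G.card_neighborFinset_eq_degree,
        nsmul_eq_mul, mul_comm]
    exact ((Finset.sum_eq_sum_iff_of_le hle).mp hsum j ((G.mem_neighborFinset i j).mpr hj)).symm
  · have h0 : G.degree i = 0 := by
      rw [← G.card_neighborFinset_eq_degree, Finset.card_eq_zero,
        Finset.eq_empty_iff_forall_notMem]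
      exact fun j hj => hiso ⟨j, (G.mem_neighborFinset i j).mp hj⟩
    have := G.minDegree_le_degree i
    omega

theorem somborMatrix_mulVec_one_nonneg (i : V) : 0 ≤ (S *ᵥ 1) i := by
  rw [somborMatrix_mulVec_one_apply]
  exact Finset.sum_nonneg fun j _ => somborMatrix_nonneg G i j

theorem somborMatrix_mulVec_one_pos {i j : V} (h : G.Adj i j) : 0 < (S *ᵥ 1) i := by
  rw [somborMatrix_mulVec_one_apply]
  exact (somborMatrix_pos G h).trans_le (Finset.single_le_sum
    (fun k _ => somborMatrix_nonneg G i k) ((G.mem_neighborFinset i j).mpr h))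

theorem sqrt_two_mul_maxDegree_mul_somborMatrix_mulVec_one_le (k : V) :
    √2 * Δ * (S *ᵥ 1) k ≤ 2 * Δ ^ 2 * G.degree k := by
  have h2 : √2 * √2 = 2 := Real.mul_self_sqrt zero_le_two
  calc √2 * Δ * (S *ᵥ 1) k ≤ √2 * Δ * (√2 * Δ * G.degree k) :=
        mul_le_mul_of_nonneg_left (somborMatrix_mulVec_one_le G k) (by positivity)
    _ = 2 * Δ ^ 2 * G.degree k := by linear_combination (Δ ^ 2 * G.degree k) * h2

theorem somborMatrix_mul_mulVec_one_le (i k : V) :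
    S i k * (S *ᵥ 1) k ≤ 2 * Δ ^ 2 * G.degree k :=
  (mul_le_mul_of_nonneg_right (somborMatrix_le G i k) (somborMatrix_mulVec_one_nonneg G k)).trans
    (sqrt_two_mul_maxDegree_mul_somborMatrix_mulVec_one_le G k)

theorem somborMatrix_eq_of_mul_mulVec_one_eq {i k : V} (hik : G.Adj i k)
    (h : S i k * (S *ᵥ 1) k = 2 * Δ ^ 2 * G.degree k) : S i k = √2 * Δ := by
  refine (somborMatrix_le G i k).antisymm (not_lt.mp fun hlt => h.not_lt ?_)
  exact (mul_lt_mul_of_pos_right hlt (somborMatrix_mulVec_one_pos G hik.symm)).trans_le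
    (sqrt_two_mul_maxDegree_mul_somborMatrix_mulVec_one_le G k)

theorem somborMatrix_mulVec_mulVec_one_le (i : V) :
    (S *ᵥ S *ᵥ 1) i ≤ 2 * Δ ^ 2 * ∑ k ∈ G.neighborFinset i, (G.degree k : ℝ) := by
  rw [somborMatrix_mulVec_apply, Finset.mul_sum]
  exact Finset.sum_le_sum fun k _ => somborMatrix_mul_mulVec_one_le G i k

theorem degree_eq_maxDegree_of_somborMatrix_mulVec_mulVec_one_eq {i k : V}
    (h : (S *ᵥ S *ᵥ 1) i = 2 * Δ ^ 2 * ∑ k ∈ G.neighborFinset i, (G.degree k : ℝ))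
    (hik : G.Adj i k) : G.degree i = G.maxDegree ∧ G.degree k = G.maxDegree := by
  rw [somborMatrix_mulVec_apply, Finset.mul_sum] at h
  have hterm := (Finset.sum_eq_sum_iff_of_le fun k _ => somborMatrix_mul_mulVec_one_le G i k).mp
    h k ((G.mem_neighborFinset i k).mpr hik)
  exact degree_eq_maxDegree_of_somborMatrix_eq G hik
    (somborMatrix_eq_of_mul_mulVec_one_eq G hik hterm)

end SomborMatrix

namespace SimpleGraph

theorem Reachable.mem_of_forall_adj_mem {V : Type*} {G : SimpleGraph V} {a b : V}
    (h : G.Reachable a b) {s : Set V} (ha : a ∈ s)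
    (hs : ∀ ⦃x y⦄, G.Adj x y → x ∈ s → y ∈ s) : b ∈ s := by
  obtain ⟨p⟩ := h
  induction p with
  | nil => exact ha
  | cons hxy _ ih => exact ih (hs hxy ha)

variable {V : Type*} [Fintype V] (G : SimpleGraph V)

theorem two_mul_card_edgeFinset_of_isRegularOfDegree {k : ℕ} (h : G.IsRegularOfDegree k) :
    2 * #G.edgeFinset = Fintype.card V * k := by
  rw [← G.sum_degrees_eq_twice_card_edges, Finset.sum_congr rfl fun v _ => h.degree_eq v,
    Finset.sum_const, Finset.card_univ, smul_eq_mul]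

theorem sum_degree_neighborFinset_add_card_add_sum_eq {i : V}
    (h : ∀ j, j ≠ i → 0 < G.degree j) :
    ∑ k ∈ G.neighborFinset i, G.degree k + Fintype.card V +
      ∑ j ∈ (G.neighborFinset i)ᶜ.erase i, (G.degree j - 1) = 2 * #G.edgeFinset + 1 := by
  have hi : i ∈ (G.neighborFinset i)ᶜ := Finset.mem_compl.mpr (G.notMem_neighborFinset_self i)
  have hsum := G.sum_degrees_eq_twice_card_edges
  rw [← Finset.sum_add_sum_compl (G.neighborFinset i), ← Finset.add_sum_erase _ _ hi] at hsum
  have hR : ∑ j ∈ (G.neighborFinset i)ᶜ.erase i, (G.degree j - 1) +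
      #((G.neighborFinset i)ᶜ.erase i) = ∑ j ∈ (G.neighborFinset i)ᶜ.erase i, G.degree j := by
    rw [Finset.card_eq_sum_ones, ← Finset.sum_add_distrib]
    exact Finset.sum_congr rfl fun j hj => Nat.sub_add_cancel (h j (Finset.ne_of_mem_erase hj))
  have hcard : #((G.neighborFinset i)ᶜ.erase i) + 1 = Fintype.card V - G.degree i := by
    rw [Finset.card_erase_add_one hi, Finset.card_compl, G.card_neighborFinset_eq_degree]
  have := G.degree_lt_card_verts i
  omega

theorem sum_degree_neighborFinset_add_card_le {i : V} (h : ∀ j, j ≠ i → 0 < G.degree j) :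
    ∑ k ∈ G.neighborFinset i, G.degree k + Fintype.card V ≤ 2 * #G.edgeFinset + 1 :=
  (Nat.le_add_right _ _).trans (G.sum_degree_neighborFinset_add_card_add_sum_eq h).le

theorem degree_eq_one_of_sum_degree_neighborFinset_add_card_eq {i : V}
    (h : ∀ j, j ≠ i → 0 < G.degree j)
    (heq : ∑ k ∈ G.neighborFinset i, G.degree k + Fintype.card V = 2 * #G.edgeFinset + 1)
    {j : V} (hji : j ≠ i) (hij : ¬G.Adj i j) : G.degree j = 1 := by
  have hzero := G.sum_degree_neighborFinset_add_card_add_sum_eq h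
  rw [heq, add_eq_left, Finset.sum_eq_zero_iff] at hzero
  have hj : j ∈ (G.neighborFinset i)ᶜ.erase i := by simp [hji, hij]
  have := hzero j hj
  have := h j hji
  omega

theorem eq_top_of_degree_eq_maxDegree_of_degree_eq_one (hconn : G.Connected) {u : V}
    (hnbr : ∀ k, G.Adj u k → G.degree k = G.maxDegree)
    (hfar : ∀ j, j ≠ u → ¬G.Adj u j → G.degree j = 1)
    (hdist2 : ∀ x j, G.Adj u x → G.Adj x j → G.degree j = G.maxDegree) : G = ⊤ := by
  have huniv : G.IsUniversal u := by
    intro y hy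
    refine ((hconn.preconnected u y).mem_of_forall_adj_mem (s := {y | y = u ∨ G.Adj u y})
      (Or.inl rfl) ?_).resolve_left hy.symm
    rintro x y hxy (rfl | hux)
    · exact Or.inr hxy
    · by_contra hy'
      obtain ⟨hyu, hnadj⟩ : y ≠ u ∧ ¬G.Adj u y := not_or.mp hy'
      have hx : 2 ≤ G.degree x := by
        rw [← G.card_neighborFinset_eq_degree, ← Finset.card_pair hyu.symm]
        refine Finset.card_le_card fun z hz => ?_
        rcases Finset.mem_insert.mp hz with rfl | hz
        · exact (G.mem_neighborFinset _ _).mpr hux.symm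
        · exact (G.mem_neighborFinset _ _).mpr (Finset.mem_singleton.mp hz ▸ hxy)
      have := hfar y hyu hnadj
      have := hdist2 x y hux hxy
      have := G.degree_le_maxDegree x
      omega
  have : Nonempty V := ⟨u⟩
  have hu : G.degree u = Fintype.card V - 1 := (G.degree_eq_card_sub_one u).mpr huniv
  have hΔ : G.maxDegree = Fintype.card V - 1 :=
    (Nat.le_sub_one_of_lt (G.maxDegree_lt_card_verts)).antisymm (hu ▸ G.degree_le_maxDegree u)
  refine G.eq_top_iff_forall_isUniversal.mpr fun k => (G.degree_eq_card_sub_one k).mp ?_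
  obtain rfl | hk := eq_or_ne k u
  · exact hu
  · exact (hnbr k (huniv hk.symm)).trans hΔ

end SimpleGraph

section SomborSpectralRadius

variable {V : Type*} [Fintype V] (G : SimpleGraph V)

local notation "S" => somborMatrix G
local notation "ρ" => somborSpecRad G
local notation "Δ" => (G.maxDegree : ℝ)
local notation "δ" => (G.minDegree : ℝ)
local notation "m" => (#G.edgeFinset : ℝ)
local notation "n" => (Fintype.card V : ℝ)

theorem exists_somborMatrix_mulVec_eq_somborSpecRad_smul_abs_le [Nonempty V] :
    ∃ (v : V → ℝ) (u : V), S *ᵥ v = ρ • v ∧ v u ≠ 0 ∧ ∀ j, |v j| ≤ |v u| := by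
  obtain ⟨v, hv0, hv⟩ := (somborMatrix_isHermitian G).exists_mulVec_eq_iSup_eigenvalues_smul
  obtain ⟨u, hu⟩ := Finite.exists_max fun j => |v j|
  obtain ⟨j, hj⟩ := Function.ne_iff.mp hv0
  exact ⟨v, u, hv, abs_pos.mp ((abs_pos.mpr hj).trans_le (hu j)), hu⟩

theorem sum_somborMatrix_mulVec_one_le : ∑ i, (S *ᵥ 1) i ≤ ρ * n := by
  have := (somborMatrix_isHermitian G).dotProduct_mulVec_le
    (fun i => le_ciSup (Set.finite_range (somborEigs G)).bddAbove i) 1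
  rwa [one_dotProduct, one_dotProduct_one] at this

theorem sum_sqrt_two_mul_minDegree_mul_degree :
    ∑ i, √2 * δ * G.degree i = √2 * δ * (2 * m) := by
  rw [← Finset.mul_sum]
  exact_mod_cast congrArg (√2 * δ * ·) (congrArg Nat.cast G.sum_degrees_eq_twice_card_edges)

theorem sqrt_two_mul_minDegree_mul_two_mul_card_edgeFinset_le :
    √2 * δ * (2 * m) ≤ ∑ i, (S *ᵥ 1) i :=
  sum_sqrt_two_mul_minDegree_mul_degree G ▸ Finset.sum_le_sum fun i _ =>
    sqrt_two_mul_minDegree_mul_degree_le_somborMatrix_mulVec_one G i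

theorem two_mul_sqrt_two_mul_card_edgeFinset_mul_minDegree_div_le_somborSpecRad [Nonempty V] :
    2 * √2 * m * δ / n ≤ ρ := by
  rw [div_le_iff₀ (by exact_mod_cast Fintype.card_pos)]
  linarith [sqrt_two_mul_minDegree_mul_two_mul_card_edgeFinset_le G,
    sum_somborMatrix_mulVec_one_le G]

theorem isRegularOfDegree_minDegree_of_two_mul_sqrt_two_mul_card_edgeFinset_mul_minDegree_div_eq
    [Nonempty V] (h : 2 * √2 * m * δ / n = ρ) : G.IsRegularOfDegree G.minDegree := by
  have hsum : ∑ i, √2 * δ * G.degree i = ∑ i, (S *ᵥ 1) i := by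
    rw [div_eq_iff (by exact_mod_cast Fintype.card_pos.ne')] at h
    rw [sum_sqrt_two_mul_minDegree_mul_degree]
    linarith [sqrt_two_mul_minDegree_mul_two_mul_card_edgeFinset_le G,
      sum_somborMatrix_mulVec_one_le G]
  intro i
  exact degree_eq_minDegree_of_somborMatrix_mulVec_one_eq G
    ((Finset.sum_eq_sum_iff_of_le fun i _ =>
      sqrt_two_mul_minDegree_mul_degree_le_somborMatrix_mulVec_one G i).mp hsum i
        (Finset.mem_univ i)).symm

theorem somborSpecRad_le_sqrt_two_mul_maxDegree_sq [Nonempty V] : ρ ≤ √2 * Δ ^ 2 := by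
  obtain ⟨v, u, hv, hvu, hu⟩ := exists_somborMatrix_mulVec_eq_somborSpecRad_smul_abs_le G
  calc ρ ≤ |ρ| := le_abs_self _
    _ ≤ (S *ᵥ 1) u := abs_le_mulVec_one_of_mulVec_eq_smul (somborMatrix_nonneg G) hv hu hvu
    _ ≤ √2 * Δ * G.degree u := somborMatrix_mulVec_one_le G u
    _ ≤ √2 * Δ ^ 2 := by
        rw [sq, ← mul_assoc]
        exact mul_le_mul_of_nonneg_left (Nat.cast_le.mpr (G.degree_le_maxDegree u)) (by positivity)

theorem two_mul_sqrt_two_mul_card_edgeFinset_mul_minDegree_div_eq_of_isRegularOfDegree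
    [Nonempty V] {k : ℕ} (h : G.IsRegularOfDegree k) : 2 * √2 * m * δ / n = √2 * k ^ 2 := by
  have h2m : 2 * m = n * k := by exact_mod_cast G.two_mul_card_edgeFinset_of_isRegularOfDegree h
  rw [h.minDegree_eq, div_eq_iff (by exact_mod_cast Fintype.card_pos.ne')]
  linear_combination √2 * k * h2m

theorem somborSpecRad_eq_of_isRegularOfDegree [Nonempty V] {k : ℕ} (h : G.IsRegularOfDegree k) :
    ρ = √2 * k ^ 2 := by
  have hL := two_mul_sqrt_two_mul_card_edgeFinset_mul_minDegree_div_eq_of_isRegularOfDegree G h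
  refine le_antisymm ?_
    (hL ▸ two_mul_sqrt_two_mul_card_edgeFinset_mul_minDegree_div_le_somborSpecRad G)
  simpa [h.maxDegree_eq] using somborSpecRad_le_sqrt_two_mul_maxDegree_sq G

theorem two_mul_sqrt_two_mul_card_edgeFinset_mul_minDegree_div_eq_somborSpecRad_iff
    [Nonempty V] : 2 * √2 * m * δ / n = ρ ↔ ∃ k, G.IsRegularOfDegree k := by
  refine ⟨fun h => ⟨_,
    isRegularOfDegree_minDegree_of_two_mul_sqrt_two_mul_card_edgeFinset_mul_minDegree_div_eq G h⟩,
    fun ⟨k, hk⟩ => ?_⟩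
  rw [two_mul_sqrt_two_mul_card_edgeFinset_mul_minDegree_div_eq_of_isRegularOfDegree G hk,
    somborSpecRad_eq_of_isRegularOfDegree G hk]

end SomborSpectralRadius

section SomborUpperBound

variable {V : Type*} [Fintype V] (G : SimpleGraph V)

local notation "S" => somborMatrix G
local notation "ρ" => somborSpecRad G
local notation "Δ" => (G.maxDegree : ℝ)
local notation "m" => (#G.edgeFinset : ℝ)
local notation "n" => (Fintype.card V : ℝ)

theorem somborMatrix_mul_self_nonneg (i j : V) : 0 ≤ (S * S) i j := by
  rw [mul_apply]
  exact Finset.sum_nonneg fun k _ =>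
    mul_nonneg (somborMatrix_nonneg G i k) (somborMatrix_nonneg G k j)

theorem somborMatrix_mul_self_pos {i k j : V} (hik : G.Adj i k) (hkj : G.Adj k j) :
    0 < (S * S) i j := by
  rw [mul_apply]
  exact (mul_pos (somborMatrix_pos G hik) (somborMatrix_pos G hkj)).trans_le
    (Finset.single_le_sum (fun l _ => mul_nonneg (somborMatrix_nonneg G i l)
      (somborMatrix_nonneg G l j)) (Finset.mem_univ k))

variable {v : V → ℝ} {u : V}

theorem sq_somborSpecRad_le_somborMatrix_mulVec_mulVec_one (hv : S *ᵥ v = ρ • v)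
    (hvu : v u ≠ 0) (hu : ∀ j, |v j| ≤ |v u|) : ρ ^ 2 ≤ (S *ᵥ S *ᵥ 1) u := by
  have := abs_le_mulVec_one_of_mulVec_eq_smul (somborMatrix_mul_self_nonneg G)
    (mul_self_mulVec_eq_sq_smul hv) hu hvu
  rwa [abs_of_nonneg (sq_nonneg _), ← mulVec_mulVec] at this

theorem abs_eq_of_sq_somborSpecRad_eq_somborMatrix_mulVec_mulVec_one (hv : S *ᵥ v = ρ • v)
    (hu : ∀ j, |v j| ≤ |v u|) (h : ρ ^ 2 = (S *ᵥ S *ᵥ 1) u) {x j : V} (hux : G.Adj u x)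
    (hxj : G.Adj x j) : |v j| = |v u| :=
  abs_eq_of_mulVec_eq_smul_of_abs_eq (somborMatrix_mul_self_nonneg G)
    (mul_self_mulVec_eq_sq_smul hv) hu (by rw [abs_of_nonneg (sq_nonneg _), h, mulVec_mulVec])
    (somborMatrix_mul_self_pos G hux hxj)

theorem sum_degree_neighborFinset_le_of_connected (hconn : G.Connected) (i : V) :
    ∑ k ∈ G.neighborFinset i, (G.degree k : ℝ) ≤ 2 * m - n + 1 := by
  have h := G.sum_degree_neighborFinset_add_card_le fun j hj =>
    (hconn.preconnected j i).degree_pos_left hj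
  have h' : ∑ k ∈ G.neighborFinset i, (G.degree k : ℝ) + n ≤ 2 * m + 1 := by exact_mod_cast h
  linarith

theorem two_mul_maxDegree_sq_mul_sum_degree_neighborFinset_le (hconn : G.Connected) (i : V) :
    2 * Δ ^ 2 * ∑ k ∈ G.neighborFinset i, (G.degree k : ℝ) ≤ 2 * Δ ^ 2 * (2 * m - n + 1) :=
  mul_le_mul_of_nonneg_left (sum_degree_neighborFinset_le_of_connected G hconn i) (by positivity)

theorem somborSpecRad_le_maxDegree_mul_sqrt (hconn : G.Connected) :
    ρ ≤ Δ * √(4 * m - 2 * n + 2) := by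
  have := hconn.nonempty
  obtain ⟨v, u, hv, hvu, hu⟩ := exists_somborMatrix_mulVec_eq_somborSpecRad_smul_abs_le G
  have hsq : ρ ^ 2 ≤ Δ ^ 2 * (4 * m - 2 * n + 2) := by
    linarith [sq_somborSpecRad_le_somborMatrix_mulVec_mulVec_one G hv hvu hu,
      somborMatrix_mulVec_mulVec_one_le G u,
      two_mul_maxDegree_sq_mul_sum_degree_neighborFinset_le G hconn u]
  calc ρ ≤ |ρ| := le_abs_self _
    _ ≤ √(Δ ^ 2 * (4 * m - 2 * n + 2)) := Real.abs_le_sqrt hsq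
    _ = Δ * √(4 * m - 2 * n + 2) := by
        rw [Real.sqrt_mul (sq_nonneg _), Real.sqrt_sq (by positivity)]

theorem eq_top_of_somborSpecRad_eq_maxDegree_mul_sqrt (hconn : G.Connected)
    (h : ρ = Δ * √(4 * m - 2 * n + 2)) : G = ⊤ := by
  have := hconn.nonempty
  obtain ⟨v, u, hv, hvu, hu⟩ := exists_somborMatrix_mulVec_eq_somborSpecRad_smul_abs_le G
  have hX : 0 ≤ 4 * m - 2 * n + 2 := by
    have : (0 : ℝ) ≤ ∑ k ∈ G.neighborFinset u, (G.degree k : ℝ) := by positivity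
    linarith [sum_degree_neighborFinset_le_of_connected G hconn u]
  have hρ : ρ ^ 2 = 2 * Δ ^ 2 * (2 * m - n + 1) := by
    rw [h, mul_pow, Real.sq_sqrt hX]; ring
  have tight : ∀ w, |v w| = |v u| → ρ ^ 2 = (S *ᵥ S *ᵥ 1) w ∧
      (S *ᵥ S *ᵥ 1) w = 2 * Δ ^ 2 * ∑ k ∈ G.neighborFinset w, (G.degree k : ℝ) ∧
      2 * Δ ^ 2 * ∑ k ∈ G.neighborFinset w, (G.degree k : ℝ) = 2 * Δ ^ 2 * (2 * m - n + 1) := by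
    intro w hw
    have h1 := sq_somborSpecRad_le_somborMatrix_mulVec_mulVec_one G hv
      (abs_pos.mp (hw ▸ abs_pos.mpr hvu)) (hw ▸ hu)
    have h2 := somborMatrix_mulVec_mulVec_one_le G w
    have h3 := two_mul_maxDegree_sq_mul_sum_degree_neighborFinset_le G hconn w
    exact ⟨by linarith, by linarith, by linarith⟩
  have hpos : ∀ j, j ≠ u → 0 < G.degree j := fun j hj => (hconn.preconnected j u).degree_pos_left hj
  refine G.eq_top_of_degree_eq_maxDegree_of_degree_eq_one hconn (u := u) (fun k hk => ?_)
    (fun j hju hnadj => ?_) (fun x j hux hxj => ?_)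
  · exact (degree_eq_maxDegree_of_somborMatrix_mulVec_mulVec_one_eq G (tight u rfl).2.1 hk).2
  · have hΔ : (0 : ℝ) < Δ := Nat.cast_pos.mpr ((hpos j hju).trans_le (G.degree_le_maxDegree j))
    have hsum := mul_left_cancel₀ (by positivity) (tight u rfl).2.2
    refine G.degree_eq_one_of_sum_degree_neighborFinset_add_card_eq hpos ?_ hju hnadj
    exact_mod_cast (by linarith : ∑ k ∈ G.neighborFinset u, (G.degree k : ℝ) + n = 2 * m + 1)
  · have hj := abs_eq_of_sq_somborSpecRad_eq_somborMatrix_mulVec_mulVec_one G hv hu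
      (tight u rfl).1 hux hxj
    exact (degree_eq_maxDegree_of_somborMatrix_mulVec_mulVec_one_eq G (tight j hj).2.1 hxj.symm).1

theorem somborSpecRad_eq_maxDegree_mul_sqrt_of_eq_top [Nonempty V] (h : G = ⊤) :
    ρ = Δ * √(4 * m - 2 * n + 2) := by
  set k := Fintype.card V - 1
  have hreg : G.IsRegularOfDegree k := fun v =>
    (G.degree_eq_card_sub_one v).mpr (G.eq_top_iff_forall_isUniversal.mp h v)
  have hn : n = k + 1 := by
    have := Fintype.card_pos (α := V)
    norm_cast; omega
  have h2m : 2 * m = n * k := by exact_mod_cast G.two_mul_card_edgeFinset_of_isRegularOfDegree hreg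
  rw [somborSpecRad_eq_of_isRegularOfDegree G hreg, hreg.maxDegree_eq,
    show 4 * m - 2 * n + 2 = k ^ 2 + k ^ 2 by linear_combination 2 * h2m + (2 * k - 2) * hn,
    ← sqrt_two_mul_eq_sqrt_sq_add_sq (Nat.cast_nonneg _)]
  ring

theorem somborSpecRad_eq_maxDegree_mul_sqrt_iff_eq_top (hconn : G.Connected) :
    ρ = Δ * √(4 * m - 2 * n + 2) ↔ G = ⊤ :=
  have := hconn.nonempty
  ⟨eq_top_of_somborSpecRad_eq_maxDegree_mul_sqrt G hconn,
    somborSpecRad_eq_maxDegree_mul_sqrt_of_eq_top G⟩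

end SomborUpperBound

theorem stmt5_general {n : ℕ} (G : SimpleGraph (Fin n)) (hconn : G.Connected) :
    (2 * Real.sqrt 2 * (G.edgeFinset.card : ℝ) * (G.minDegree : ℝ) / n ≤ somborSpecRad G ∧
      somborSpecRad G ≤
        (G.maxDegree : ℝ) * Real.sqrt (4 * (G.edgeFinset.card : ℝ) - 2 * n + 2)) ∧
    (2 * Real.sqrt 2 * (G.edgeFinset.card : ℝ) * (G.minDegree : ℝ) / n = somborSpecRad G ↔
      ∃ k, G.IsRegularOfDegree k) ∧
    (somborSpecRad G =
        (G.maxDegree : ℝ) * Real.sqrt (4 * (G.edgeFinset.card : ℝ) - 2 * n + 2) ↔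
      G = ⊤) := by
  have := hconn.nonempty
  have hlow := two_mul_sqrt_two_mul_card_edgeFinset_mul_minDegree_div_le_somborSpecRad G
  have hlow_eq := two_mul_sqrt_two_mul_card_edgeFinset_mul_minDegree_div_eq_somborSpecRad_iff G
  have hup := somborSpecRad_le_maxDegree_mul_sqrt G hconn
  have hup_eq := somborSpecRad_eq_maxDegree_mul_sqrt_iff_eq_top G hconn
  simp only [Fintype.card_fin] at hlow hlow_eq hup hup_eq
  exact ⟨⟨hlow, hup⟩, hlow_eq, hup_eq⟩

theorem stmt5 {n : ℕ} [NeZero n] (G : SimpleGraph (Fin n)) (hconn : G.Connected) :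
    (2 * Real.sqrt 2 * (G.edgeFinset.card : ℝ) * (G.minDegree : ℝ) / n ≤ somborSpecRad G ∧
      somborSpecRad G ≤
        (G.maxDegree : ℝ) * Real.sqrt (4 * (G.edgeFinset.card : ℝ) - 2 * n + 2)) ∧
    (2 * Real.sqrt 2 * (G.edgeFinset.card : ℝ) * (G.minDegree : ℝ) / n = somborSpecRad G ↔
      ∃ k, G.IsRegularOfDegree k) ∧
    (somborSpecRad G =
        (G.maxDegree : ℝ) * Real.sqrt (4 * (G.edgeFinset.card : ℝ) - 2 * n + 2) ↔
      G = ⊤) :=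
  stmt5_general G hconn
end

section
/- If G is a connected simple graph whose Sombor matrix has exactly k ≥ 2 distinct eigenvalues, then the diameter of G is at most k − 1. -/
open scoped Classical

/-!
The Sombor matrix `S` is real symmetric, hence diagonalizable, so the monic polynomial
`q = ∏ (X - μ)` over its `k` distinct eigenvalues annihilates it. The entries of `S` are positive
exactly on the edges, so `(S ^ m) u v = 0` for `m < d(u, v)` while `(S ^ d(u, v)) u v > 0`.
If `d(u, v) ≥ k`, the monic annihilator `q * X ^ (d(u, v) - k)` has degree `d(u, v)`, and its
`(u, v)` entry is `(S ^ d(u, v)) u v > 0`, a contradiction.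
-/

open Polynomial

namespace SimpleGraph

variable {V R : Type*}

structure IsPositiveWeightMatrix [Zero R] [LT R] (G : SimpleGraph V) (A : Matrix V V R) :
    Prop where
  pos_of_adj : ∀ {i j}, G.Adj i j → 0 < A i j
  eq_zero_of_not_adj : ∀ {i j}, ¬G.Adj i j → A i j = 0

namespace IsPositiveWeightMatrix

variable {G : SimpleGraph V}

lemma nonneg [Zero R] [Preorder R] {A : Matrix V V R} (hA : G.IsPositiveWeightMatrix A)
    (i j : V) : 0 ≤ A i j := by
  by_cases h : G.Adj i j
  · exact (hA.pos_of_adj h).le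
  · exact (hA.eq_zero_of_not_adj h).ge

variable [Fintype V] [DecidableEq V] [CommSemiring R] [PartialOrder R] {A : Matrix V V R}

lemma pow_nonneg [IsOrderedRing R] (hA : G.IsPositiveWeightMatrix A) (m : ℕ) (i j : V) :
    0 ≤ (A ^ m) i j := by
  induction m generalizing i with
  | zero => by_cases h : i = j <;> simp [h]
  | succ m ih =>
    rw [pow_succ', Matrix.mul_apply]
    exact Finset.sum_nonneg fun w _ => mul_nonneg (hA.nonneg i w) (ih w)

lemma pow_length_apply_pos [IsStrictOrderedRing R] (hA : G.IsPositiveWeightMatrix A) {u v : V}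
    (p : G.Walk u v) : 0 < (A ^ p.length) u v := by
  induction p with
  | nil => simp
  | @cons u w v huw p ih =>
    rw [Walk.length_cons, pow_succ', Matrix.mul_apply]
    exact Finset.sum_pos' (fun x _ => mul_nonneg (hA.nonneg u x) (hA.pow_nonneg _ x v))
      ⟨w, Finset.mem_univ w, mul_pos (hA.pos_of_adj huw) ih⟩

lemma pow_apply_eq_zero_of_lt_dist (hA : G.IsPositiveWeightMatrix A) {m : ℕ} {u v : V}
    (h : m < G.dist u v) : (A ^ m) u v = 0 := by
  induction m generalizing u with
  | zero => exact Matrix.one_apply_ne fun huv => by simp [huv] at h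
  | succ m ih =>
    rw [pow_succ', Matrix.mul_apply]
    refine Finset.sum_eq_zero fun w _ => ?_
    by_cases huw : G.Adj u w
    · have hdist := huw.symm.diff_dist_adj (u := v)
      rw [dist_comm (u := v), dist_comm (u := v)] at hdist
      rw [ih (by omega), mul_zero]
    · rw [hA.eq_zero_of_not_adj huw, zero_mul]

lemma aeval_apply_of_natDegree_eq_dist (hA : G.IsPositiveWeightMatrix A) {p : R[X]}
    (hp : p.Monic) {u v : V} (hdeg : p.natDegree = G.dist u v) :
    aeval A p u v = (A ^ G.dist u v) u v := by
  rw [aeval_eq_sum_range, ← hdeg, Finset.sum_range_succ, hp.coeff_natDegree, one_smul,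
    Matrix.add_apply, Matrix.sum_apply, Finset.sum_eq_zero fun i hi => ?_, zero_add]
  rw [Matrix.smul_apply, hA.pow_apply_eq_zero_of_lt_dist (by simpa [hdeg] using hi), smul_zero]

lemma dist_lt_natDegree [IsStrictOrderedRing R] (hA : G.IsPositiveWeightMatrix A) {p : R[X]}
    (hp : p.Monic) (hpA : aeval A p = 0) {u v : V} (huv : G.Reachable u v) :
    G.dist u v < p.natDegree := by
  by_contra! hle
  obtain ⟨w, hw⟩ := huv.exists_walk_length_eq_dist
  have hq : (p * X ^ (G.dist u v - p.natDegree)).Monic := hp.mul (monic_X_pow _)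
  have hdeg : (p * X ^ (G.dist u v - p.natDegree)).natDegree = G.dist u v := by
    rw [hp.natDegree_mul (monic_X_pow _), natDegree_X_pow]
    omega
  have hentry := hA.aeval_apply_of_natDegree_eq_dist hq hdeg
  rw [map_mul, hpA, zero_mul, ← hw] at hentry
  exact (hA.pow_length_apply_pos w).ne hentry

end IsPositiveWeightMatrix

end SimpleGraph

lemma Matrix.IsHermitian.aeval_prod_eigenvalues_eq_zero {𝕜 n : Type*} [RCLike 𝕜] [Fintype n]
    [DecidableEq n] {A : Matrix n n 𝕜} (hA : A.IsHermitian) :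
    aeval A (∏ μ ∈ Finset.univ.image hA.eigenvalues, (X - C (μ : 𝕜))) = 0 := by
  set q := ∏ μ ∈ Finset.univ.image hA.eigenvalues, (X - C (μ : 𝕜))
  have hroot (i : n) : aeval (hA.eigenvalues i : 𝕜) q = 0 := by
    simp only [q, map_prod]
    exact Finset.prod_eq_zero (Finset.mem_image_of_mem _ (Finset.mem_univ i)) (by simp)
  rw [hA.spectral_theorem, aeval_algHom_apply, ← Matrix.diagonalAlgHom_apply (R := 𝕜),
    aeval_algHom_apply, aeval_pi_apply]
  simp [hroot]

lemma SimpleGraph.diam_le_of_forall_dist_le {V : Type*} {G : SimpleGraph V} {d : ℕ}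
    (h : ∀ u v, G.dist u v ≤ d) : G.diam ≤ d := by
  by_cases htop : G.ediam = ⊤
  · simp [diam_eq_zero_of_ediam_eq_top htop]
  · have hconn := preconnected_of_ediam_ne_top htop
    refine ENat.toNat_le_of_le_natCast (ediam_le_of_edist_le fun u v => ?_)
    rw [← (hconn u v).coe_dist_eq_edist]
    exact_mod_cast h u v

lemma isPositiveWeightMatrix_somborMatrix {V : Type*} [Fintype V] (G : SimpleGraph V) :
    G.IsPositiveWeightMatrix (somborMatrix G) where
  pos_of_adj {i j} h := by
    have : 0 < G.degree i := G.degree_pos_iff_exists_adj i |>.mpr ⟨j, h⟩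
    rw [somborMatrix, if_pos h]
    positivity
  eq_zero_of_not_adj h := if_neg h

theorem stmt8_general {n : ℕ} (G : SimpleGraph (Fin n)) (k : ℕ)
    (hdist : (Finset.univ.image (somborEigs G)).card = k) :
    G.diam ≤ k - 1 := by
  set q := ∏ μ ∈ Finset.univ.image (somborEigs G), (X - C μ)
  have hq : q.Monic := monic_prod_of_monic _ _ fun μ _ => monic_X_sub_C μ
  have hdeg : q.natDegree = k := by rw [natDegree_finsetProd_X_sub_C_eq_card, hdist]
  have hqA : aeval (somborMatrix G) q = 0 :=
    (somborMatrix_isHermitian G).aeval_prod_eigenvalues_eq_zero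
  refine G.diam_le_of_forall_dist_le fun u v => ?_
  by_cases huv : G.Reachable u v
  · have := (isPositiveWeightMatrix_somborMatrix G).dist_lt_natDegree hq hqA huv
    omega
  · simp [SimpleGraph.dist_eq_zero_of_not_reachable huv]

theorem stmt8 {n : ℕ} (G : SimpleGraph (Fin n)) (hconn : G.Connected) (k : ℕ)
    (hk : 2 ≤ k) (hdist : (Finset.univ.image (somborEigs G)).card = k) :
    G.diam ≤ k - 1 :=
  stmt8_general G k hdist
end

section
/- Let G be a tree on n ≥ 2 vertices. Then the Sombor spectral radius satisfies ρ_1(G) ≤ √((n−1)(n²−2n+2)), with equality if and only if G is the star K_{1,n−1}. -/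
open scoped Classical

/-!
A tree is bipartite, and conjugating its Sombor matrix `S` by the `±1` diagonal matrix of a
2-colouring negates `S`. Hence the spectrum is symmetric, `-ρ` is an eigenvalue alongside `ρ`, and
`2ρ² ≤ tr S² = 2 ∑ d_v³`. As `1 ≤ d_v ≤ n - 1`, each `d_v³` lies below the secant of `x ↦ x³`
between `1` and `n - 1`; summing with `∑ d_v = 2(n - 1)` gives `∑ d_v³ ≤ (n - 1)((n - 1)² + 1)`,
with equality only if every degree is `1` or `n - 1`, that is, only for the star. Conversely, for
the star `(√(n - 1), 1, …, 1)` is an eigenvector for `√((n - 1)((n - 1)² + 1))`.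
-/

open Finset
open scoped Matrix

lemma secant_sub_cube (x c : ℝ) :
    1 + (x - 1) * (c ^ 2 + c + 1) - x ^ 3 = (x - 1) * (c - x) * (c + x + 1) := by
  ring

lemma cube_le_secant {x c : ℝ} (h1 : 1 ≤ x) (hc : x ≤ c) :
    x ^ 3 ≤ 1 + (x - 1) * (c ^ 2 + c + 1) := by
  have : 0 ≤ (x - 1) * (c - x) * (c + x + 1) :=
    mul_nonneg (mul_nonneg (by linarith) (by linarith)) (by linarith)
  linarith [secant_sub_cube x c]

lemma eq_one_or_eq_of_cube_eq_secant {x c : ℝ} (h1 : 1 ≤ x) (hc : x ≤ c)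
    (h : x ^ 3 = 1 + (x - 1) * (c ^ 2 + c + 1)) : x = 1 ∨ x = c := by
  have : (x - 1) * (c - x) * (c + x + 1) = 0 := by linarith [secant_sub_cube x c]
  rcases mul_eq_zero.mp this with h0 | h0
  · rcases mul_eq_zero.mp h0 with h0 | h0
    · exact Or.inl (by linarith)
    · exact Or.inr (by linarith)
  · linarith

open Finset
open scoped Matrix

namespace Matrix.IsHermitian

variable {n : Type*} [Fintype n] [DecidableEq n] {A : Matrix n n ℝ}

lemma exists_eigenvalues_eq_of_mulVec_eq_smul (hA : A.IsHermitian) {x : n → ℝ} {μ : ℝ}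
    (hx : x ≠ 0) (hAx : A *ᵥ x = μ • x) : ∃ i, hA.eigenvalues i = μ := by
  have hμ : Module.End.HasEigenvalue A.toLin' μ :=
    Module.End.hasEigenvalue_of_hasEigenvector
      ⟨by rwa [Module.End.mem_eigenspace_iff, toLin'_apply], hx⟩
  show μ ∈ Set.range hA.eigenvalues
  rw [← hA.spectrum_real_eq_range_eigenvalues, ← spectrum_toLin']
  exact hμ.mem_spectrum

lemma trace_mul_self (hA : A.IsHermitian) : (A * A).trace = ∑ i, hA.eigenvalues i ^ 2 := by
  conv_lhs => rw [hA.spectral_theorem, ← map_mul, Unitary.conjStarAlgAut_apply, trace_mul_cycle,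
    Unitary.star_mul_self_of_mem hA.eigenvectorUnitary.2, one_mul, diagonal_mul_diagonal,
    trace_diagonal]
  simp [sq]

lemma exists_eigenvalues_eq_neg_of_mul_diagonal_eq_neg (hA : A.IsHermitian) {ε : n → ℝ}
    (hε : ∀ i, ε i ≠ 0) (hAε : A * diagonal ε = -(diagonal ε * A)) (i : n) :
    ∃ j, hA.eigenvalues j = -hA.eigenvalues i := by
  set x : n → ℝ := ⇑(hA.eigenvectorBasis i)
  have hx : x ≠ 0 := (WithLp.ofLp_eq_zero 2).ne.2 (hA.eigenvectorBasis.orthonormal.ne_zero i)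
  refine hA.exists_eigenvalues_eq_of_mulVec_eq_smul (x := diagonal ε *ᵥ x) ?_ ?_
  · obtain ⟨k, hk⟩ := Function.ne_iff.mp hx
    exact Function.ne_iff.mpr ⟨k, by simpa [mulVec_diagonal] using ⟨hε k, hk⟩⟩
  · rw [mulVec_mulVec, hAε, neg_mulVec, ← mulVec_mulVec, hA.mulVec_eigenvectorBasis, mulVec_smul,
      neg_smul]

lemma two_mul_sq_eigenvalues_le_trace_mul_self (hA : A.IsHermitian) {ε : n → ℝ}
    (hε : ∀ i, ε i ≠ 0) (hAε : A * diagonal ε = -(diagonal ε * A)) (i : n) :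
    2 * hA.eigenvalues i ^ 2 ≤ (A * A).trace := by
  rcases eq_or_ne (hA.eigenvalues i) 0 with h0 | h0
  · simpa [h0, hA.trace_mul_self] using sum_nonneg fun k _ => sq_nonneg (hA.eigenvalues k)
  obtain ⟨j, hj⟩ := hA.exists_eigenvalues_eq_neg_of_mul_diagonal_eq_neg hε hAε i
  have hij : i ≠ j := by rintro rfl; exact h0 (by linarith)
  calc 2 * hA.eigenvalues i ^ 2 = ∑ k ∈ {i, j}, hA.eigenvalues k ^ 2 := by
        rw [sum_pair hij, hj]; ring
    _ ≤ ∑ k, hA.eigenvalues k ^ 2 :=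
        sum_le_sum_of_subset_of_nonneg (subset_univ _) fun k _ _ => sq_nonneg _
    _ = (A * A).trace := hA.trace_mul_self.symm

end Matrix.IsHermitian

namespace SimpleGraph

variable {V : Type*} [Fintype V] {G : SimpleGraph V}

lemma somborMatrix_apply_of_not_adj {i j : V} (h : ¬ G.Adj i j) : somborMatrix G i j = 0 :=
  if_neg h

lemma somborMatrix_apply_mul_apply_swap (i j : V) :
    somborMatrix G i j * somborMatrix G j i =
      if G.Adj i j then (G.degree i : ℝ) ^ 2 + (G.degree j : ℝ) ^ 2 else 0 := by
  by_cases h : G.Adj i j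
  · rw [somborMatrix, if_pos h, if_pos h, somborMatrix, if_pos h.symm,
      add_comm ((G.degree j : ℝ) ^ 2), Real.mul_self_sqrt (by positivity)]
  · rw [somborMatrix_apply_of_not_adj h, zero_mul, if_neg h]

lemma sum_ite_adj (i : V) (a : ℝ) : ∑ j, (if G.Adj i j then a else 0) = G.degree i * a := by
  rw [sum_ite, sum_const_zero, add_zero, sum_const, ← neighborFinset_eq_filter,
    card_neighborFinset_eq_degree, nsmul_eq_mul]

section

variable (G)

lemma trace_somborMatrix_mul_self :
    (somborMatrix G * somborMatrix G).trace = 2 * forgottenIndex G := by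
  have hsplit : ∀ i j, (if G.Adj i j then (G.degree i : ℝ) ^ 2 + (G.degree j : ℝ) ^ 2 else 0) =
      (if G.Adj i j then (G.degree i : ℝ) ^ 2 else 0) +
        (if G.Adj j i then (G.degree j : ℝ) ^ 2 else 0) := by
    intro i j
    rw [G.adj_comm j i]
    split_ifs <;> ring
  simp only [Matrix.trace, Matrix.diag, Matrix.mul_apply, somborMatrix_apply_mul_apply_swap,
    hsplit, sum_add_distrib]
  rw [sum_comm (f := fun i j => if G.Adj j i then (G.degree j : ℝ) ^ 2 else 0)]
  simp only [sum_ite_adj, forgottenIndex, ← pow_succ', ← two_mul]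

lemma forgottenIndex_nonneg : 0 ≤ forgottenIndex G :=
  sum_nonneg fun _ _ => by positivity

lemma somborEigs_le_somborSpecRad (i : V) : somborEigs G i ≤ somborSpecRad G :=
  le_ciSup (Set.finite_range _).bddAbove i

lemma exists_somborEigs_eq_somborSpecRad [Nonempty V] : ∃ i, somborEigs G i = somborSpecRad G :=
  exists_eq_ciSup_of_finite

end

lemma IsBipartite.somborSpecRad_le_sqrt_forgottenIndex [Nonempty V] (hG : G.IsBipartite) :
    somborSpecRad G ≤ √(forgottenIndex G) := by
  obtain ⟨c⟩ := hG
  set ε : V → ℝ := fun v => if c v = 0 then 1 else -1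
  have hε : ∀ v, ε v ≠ 0 := fun v => by by_cases h : c v = 0 <;> simp [ε, h]
  have hεadj : ∀ {u v}, G.Adj u v → ε v = -ε u := by
    intro u v h
    have := c.valid h
    simp only [ε]
    generalize c u = a, c v = b at this
    fin_cases a <;> fin_cases b <;> simp_all
  have hanti : somborMatrix G * Matrix.diagonal ε = -(Matrix.diagonal ε * somborMatrix G) := by
    ext i j
    simp only [Matrix.mul_diagonal, Matrix.diagonal_mul, Matrix.neg_apply]
    by_cases h : G.Adj i j
    · rw [hεadj h]; ring
    · simp [somborMatrix_apply_of_not_adj h]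
  obtain ⟨i, hi⟩ := exists_somborEigs_eq_somborSpecRad G
  have := (somborMatrix_isHermitian G).two_mul_sq_eigenvalues_le_trace_mul_self hε hanti i
  rw [trace_somborMatrix_mul_self] at this
  rw [← hi]
  exact (le_abs_self _).trans (Real.abs_le_sqrt (le_of_mul_le_mul_left this two_pos))

lemma IsTree.sum_degree_eq (hG : G.IsTree) :
    ∑ v, (G.degree v : ℝ) = 2 * ((Fintype.card V : ℝ) - 1) := by
  have hcard : (G.edgeFinset.card : ℝ) + 1 = Fintype.card V := by
    exact_mod_cast hG.card_edgeFinset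
  rw [← Nat.cast_sum, sum_degrees_eq_twice_card_edges]
  push_cast
  linarith

lemma Preconnected.one_le_degree [Nontrivial V] (hG : G.Preconnected) (v : V) :
    1 ≤ (G.degree v : ℝ) := by
  exact_mod_cast hG.degree_pos_of_nontrivial v

lemma cast_degree_le_card_sub_one (v : V) : (G.degree v : ℝ) ≤ Fintype.card V - 1 := by
  have : G.degree v + 1 ≤ Fintype.card V := G.degree_lt_card_verts v
  have : (G.degree v : ℝ) + 1 ≤ Fintype.card V := by exact_mod_cast this
  linarith

lemma IsTree.sum_secant_eq (hG : G.IsTree) :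
    ∑ v, (1 + ((G.degree v : ℝ) - 1) *
        (((Fintype.card V : ℝ) - 1) ^ 2 + ((Fintype.card V : ℝ) - 1) + 1)) =
      ((Fintype.card V : ℝ) - 1) * (((Fintype.card V : ℝ) - 1) ^ 2 + 1) := by
  rw [sum_add_distrib, ← sum_mul, sum_sub_distrib, hG.sum_degree_eq]
  simp only [sum_const, card_univ, nsmul_eq_mul, mul_one]
  ring

lemma IsTree.forgottenIndex_le [Nontrivial V] (hG : G.IsTree) :
    forgottenIndex G ≤ ((Fintype.card V : ℝ) - 1) * (((Fintype.card V : ℝ) - 1) ^ 2 + 1) := by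
  rw [← hG.sum_secant_eq]
  exact sum_le_sum fun v _ =>
    cube_le_secant (hG.connected.preconnected.one_le_degree v)
      (cast_degree_le_card_sub_one v)

lemma IsTree.exists_isUniversal_of_forgottenIndex_eq [Nontrivial V] (hG : G.IsTree)
    (h : forgottenIndex G = ((Fintype.card V : ℝ) - 1) * (((Fintype.card V : ℝ) - 1) ^ 2 + 1)) :
    ∃ v, G.IsUniversal v := by
  set n : ℝ := (Fintype.card V : ℝ)
  have h1 := hG.connected.preconnected.one_le_degree
  have hdeg : ∀ v, (G.degree v : ℝ) = 1 ∨ (G.degree v : ℝ) = n - 1 := by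
    rw [← hG.sum_secant_eq, forgottenIndex] at h
    intro v
    refine eq_one_or_eq_of_cube_eq_secant (h1 v) (cast_degree_le_card_sub_one v) ?_
    exact (sum_eq_sum_iff_of_le fun v _ =>
      cube_le_secant (h1 v) (cast_degree_le_card_sub_one v)).mp h v (mem_univ v)
  suffices ∃ v, (G.degree v : ℝ) = n - 1 by
    obtain ⟨v, hv⟩ := this
    refine ⟨v, (G.degree_eq_card_sub_one v).mp ?_⟩
    have : (G.degree v : ℝ) + 1 = Fintype.card V := by linarith
    have : G.degree v + 1 = Fintype.card V := by exact_mod_cast this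
    omega
  by_contra! hne
  have hleaf : ∀ v, (G.degree v : ℝ) = 1 := fun v => (hdeg v).resolve_right (hne v)
  have hsum := hG.sum_degree_eq
  simp only [hleaf, sum_const, card_univ, nsmul_eq_mul, mul_one] at hsum
  obtain ⟨v⟩ : Nonempty V := inferInstance
  exact hne v (by linarith [hleaf v])

lemma IsUniversal.degree_eq_one_of_cliqueFree_three (h3 : G.CliqueFree 3) {v : V}
    (hv : G.IsUniversal v) {w : V} (hw : w ≠ v) : G.degree w = 1 := by
  rw [← card_neighborFinset_eq_degree, card_eq_one]
  refine ⟨v, eq_singleton_iff_unique_mem.mpr ⟨(mem_neighborFinset _ _ _).mpr (hv hw.symm).symm,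
    fun u hu => ?_⟩⟩
  rw [mem_neighborFinset] at hu
  by_contra huv
  exact h3 {v, w, u} (is3Clique_triple_iff.mpr ⟨hv hw.symm, hv (Ne.symm huv), hu⟩)

lemma IsUniversal.sqrt_le_somborSpecRad [Nontrivial V] (h3 : G.CliqueFree 3) {v : V}
    (hv : G.IsUniversal v) :
    √(((Fintype.card V : ℝ) - 1) * (((Fintype.card V : ℝ) - 1) ^ 2 + 1)) ≤ somborSpecRad G := by
  set n : ℝ := (Fintype.card V : ℝ)
  have hn : 1 ≤ n := Nat.one_le_cast.mpr Fintype.card_pos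
  set c := √((n - 1) ^ 2 + 1)
  have hdv : (G.degree v : ℝ) = n - 1 := by
    rw [(G.degree_eq_card_sub_one v).mpr hv, Nat.cast_pred Fintype.card_pos]
  have hspoke : ∀ {u w}, u ≠ w → (u = v ∨ w = v) → somborMatrix G u w = c := by
    rintro u w huw (rfl | rfl)
    · rw [somborMatrix, if_pos (hv huw), hdv, hv.degree_eq_one_of_cliqueFree_three h3 huw.symm]
      norm_num [c]
    · rw [somborMatrix, if_pos (hv huw.symm).symm, hdv,
        hv.degree_eq_one_of_cliqueFree_three h3 huw]
      norm_num [c, add_comm]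
  have hrim : ∀ {u w}, u ≠ v → w ≠ v → somborMatrix G u w = 0 := fun hu hw =>
    somborMatrix_apply_of_not_adj fun h =>
      h3 {v, _, _} (is3Clique_triple_iff.mpr ⟨hv (Ne.symm hu), hv (Ne.symm hw), h⟩)
  set z : V → ℝ := fun u => if u = v then √(n - 1) else 1
  have hzv : z v = √(n - 1) := if_pos rfl
  have hzw : ∀ {w}, w ≠ v → z w = 1 := fun hw => if_neg hw
  have hz : somborMatrix G *ᵥ z = (√(n - 1) * c) • z := by
    ext u
    simp only [Matrix.mulVec, dotProduct, Pi.smul_apply, smul_eq_mul]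
    by_cases hu : u = v
    · subst hu
      rw [← sum_erase_add _ _ (mem_univ u), somborMatrix_apply_of_not_adj (G.irrefl),
        zero_mul, add_zero, sum_congr rfl fun w hw => by
          rw [hspoke (ne_of_mem_erase hw).symm (Or.inl rfl), hzw (ne_of_mem_erase hw), mul_one],
        sum_const, card_erase_of_mem (mem_univ u), card_univ, nsmul_eq_mul,
        Nat.cast_pred Fintype.card_pos, hzv]
      rw [mul_assoc, mul_comm c, ← mul_assoc, Real.mul_self_sqrt (by linarith)]
    · rw [sum_eq_single v (fun w _ hw => by rw [hrim hu hw, zero_mul]) (by simp),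
        hspoke hu (Or.inr rfl), hzv, hzw hu]
      ring
  have hz0 : z ≠ 0 := by
    obtain ⟨w, hw⟩ := exists_ne v
    exact Function.ne_iff.mpr ⟨w, by simp [hzw hw]⟩
  obtain ⟨i, hi⟩ := (somborMatrix_isHermitian G).exists_eigenvalues_eq_of_mulVec_eq_smul hz0 hz
  rw [Real.sqrt_mul (by linarith), ← hi]
  exact somborEigs_le_somborSpecRad G i

lemma IsTree.somborSpecRad_le [Nontrivial V] (hG : G.IsTree) :
    somborSpecRad G ≤ √(((Fintype.card V : ℝ) - 1) * (((Fintype.card V : ℝ) - 1) ^ 2 + 1)) :=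
  hG.isBipartite.somborSpecRad_le_sqrt_forgottenIndex.trans
    (Real.sqrt_le_sqrt hG.forgottenIndex_le)

end SimpleGraph

theorem stmt9 {n : ℕ} (hn : 2 ≤ n) (G : SimpleGraph (Fin n)) (htree : G.IsTree) :
    somborSpecRad G ≤ Real.sqrt (((n : ℝ) - 1) * ((n : ℝ) ^ 2 - 2 * n + 2)) ∧
    (somborSpecRad G = Real.sqrt (((n : ℝ) - 1) * ((n : ℝ) ^ 2 - 2 * n + 2)) ↔
      ∃ v, ∀ w, w ≠ v → G.Adj v w) := by
  have : Nontrivial (Fin n) := Fin.nontrivial_iff_two_le.mpr hn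
  have hbound : ((n : ℝ) - 1) * ((n : ℝ) ^ 2 - 2 * n + 2) =
      ((Fintype.card (Fin n) : ℝ) - 1) * (((Fintype.card (Fin n) : ℝ) - 1) ^ 2 + 1) := by
    rw [Fintype.card_fin]; ring
  rw [hbound]
  refine ⟨htree.somborSpecRad_le, fun heq => ?_, fun ⟨v, hv⟩ => ?_⟩
  · have hF : √_ ≤ √(forgottenIndex G) :=
      heq ▸ htree.isBipartite.somborSpecRad_le_sqrt_forgottenIndex
    rw [Real.sqrt_le_sqrt_iff (G.forgottenIndex_nonneg)] at hF
    obtain ⟨v, hv⟩ :=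
      htree.exists_isUniversal_of_forgottenIndex_eq (htree.forgottenIndex_le.antisymm hF)
    exact ⟨v, fun w hw => hv hw.symm⟩
  · have hv : G.IsUniversal v := fun w hw => hv w hw.symm
    exact htree.somborSpecRad_le.antisymm
      (hv.sqrt_le_somborSpecRad (htree.isAcyclic.cliqueFree le_rfl))
end

section
/- Let G be a simple graph on n vertices with Sombor energy E(G) and forgotten topological index F. Then √(2F + n(n−1)|det S(G)|^{2/n}) ≤ E(G) ≤ √(2(n−1)F + n|det S(G)|^{2/n}). -/
open scoped Classical

/-!
With `λᵢ` the Sombor eigenvalues, `∑ λᵢ² = tr S² = 2F` and `∏ |λᵢ| = |det S|`. Expanding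
`(∑ |λᵢ|)² = ∑ λᵢ² + ∑_{i ≠ j} |λᵢ λⱼ|` and applying AM–GM to the `n(n-1)` cross terms gives the
lower bound. The upper bound is Kober's inequality `(∑ xᵢ)² ≤ (n-1) ∑ xᵢ² + n (∏ xᵢ)^(2/n)` for
`xᵢ = |λᵢ|`.
-/

open Finset

/-- Weighted AM–GM for `t²` and `(t gᵐ)^(2/(m+1))` with weights `(m-1)/2m` and `(m+1)/2m`. -/
theorem Real.two_mul_mul_le_sq_add_rpow {m : ℕ} (hm : 1 ≤ m) {t g : ℝ} (ht : 0 ≤ t) (hg : 0 ≤ g) :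
    2 * m * (t * g) ≤ (m - 1) * t ^ 2 + (m + 1) * (t * g ^ m) ^ ((2 : ℝ) / (m + 1)) := by
  have hm' : (1 : ℝ) ≤ m := by exact_mod_cast hm
  have htg : 0 ≤ t * g ^ m := by positivity
  have hamgm := Real.geom_mean_le_arith_mean2_weighted (p₁ := t ^ 2)
    (p₂ := (t * g ^ m) ^ ((2 : ℝ) / (m + 1))) (w₁ := (m - 1) / (2 * m)) (w₂ := (m + 1) / (2 * m))
    (by positivity) (by positivity) (by positivity) (by positivity) (by field_simp; ring)
  have hsq : (t ^ 2) ^ ((m - 1 : ℝ) / (2 * m)) = t ^ ((m - 1 : ℝ) / m) := by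
    rw [← Real.rpow_natCast, ← Real.rpow_mul ht]
    congr 1
    field_simp
    push_cast
    ring
  have hroot :
      ((t * g ^ m) ^ ((2 : ℝ) / (m + 1))) ^ ((m + 1 : ℝ) / (2 * m)) = t ^ (m : ℝ)⁻¹ * g := by
    rw [← Real.rpow_mul htg, show (2 : ℝ) / (m + 1) * ((m + 1) / (2 * m)) = (m : ℝ)⁻¹ by field_simp,
      Real.mul_rpow ht (by positivity), Real.pow_rpow_inv_natCast hg (by omega)]
  rw [hsq, hroot, ← mul_assoc, ← Real.rpow_add' ht (by positivity),
    show (m - 1 : ℝ) / m + (m : ℝ)⁻¹ = 1 by field_simp; ring, Real.rpow_one] at hamgm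
  calc 2 * m * (t * g)
      ≤ 2 * m * ((m - 1) / (2 * m) * t ^ 2 +
          (m + 1) / (2 * m) * (t * g ^ m) ^ ((2 : ℝ) / (m + 1))) := by gcongr
    _ = (m - 1) * t ^ 2 + (m + 1) * (t * g ^ m) ^ ((2 : ℝ) / (m + 1)) := by field_simp

namespace Finset

variable {ι : Type*} (s : Finset ι) (x : ι → ℝ)

theorem card_mul_prod_rpow_inv_card_le_sum (hx : ∀ i ∈ s, 0 ≤ x i) :
    #s * (∏ i ∈ s, x i) ^ (#s : ℝ)⁻¹ ≤ ∑ i ∈ s, x i := by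
  rcases s.eq_empty_or_nonempty with rfl | hs
  · simp
  have hcard : (0 : ℝ) < #s := by exact_mod_cast hs.card_pos
  have := Real.geom_mean_le_arith_mean s (fun _ ↦ 1) x (fun _ _ ↦ zero_le_one)
    (by simpa using hcard) hx
  simp only [Real.rpow_one, one_mul, sum_const, nsmul_eq_mul, mul_one] at this
  rwa [le_div_iff₀ hcard, mul_comm] at this

theorem sq_sum_eq_sum_sq_add_sum_sigma_erase [DecidableEq ι] :
    (∑ i ∈ s, x i) ^ 2 = ∑ i ∈ s, x i ^ 2 + ∑ p ∈ s.sigma s.erase, x p.1 * x p.2 := by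
  rw [sum_sigma, sq, sum_mul_sum, ← sum_add_distrib]
  refine sum_congr rfl fun i hi ↦ ?_
  rw [← add_sum_erase s _ hi, sq]

theorem card_sigma_erase [DecidableEq ι] : #(s.sigma s.erase) = #s * (#s - 1) := by
  rw [card_sigma, sum_congr rfl fun i hi ↦ card_erase_of_mem hi, sum_const, smul_eq_mul]

theorem prod_sigma_erase [DecidableEq ι] :
    ∏ p ∈ s.sigma s.erase, x p.1 * x p.2 = (∏ i ∈ s, x i) ^ (2 * (#s - 1)) := by
  have hswap : ∏ p ∈ s.sigma s.erase, x p.2 = ∏ p ∈ s.sigma s.erase, x p.1 :=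
    prod_nbij' (fun p ↦ ⟨p.2, p.1⟩) (fun p ↦ ⟨p.2, p.1⟩) (by simp +contextual [eq_comm])
      (by simp +contextual [eq_comm]) (by simp) (by simp) (by simp)
  have hfst : ∏ p ∈ s.sigma s.erase, x p.1 = ∏ i ∈ s, x i ^ (#s - 1) := by
    rw [prod_sigma]
    exact prod_congr rfl fun i hi ↦ by simp [card_erase_of_mem hi]
  rw [prod_mul_distrib, hswap, hfst, prod_pow, ← sq, ← pow_mul, mul_comm]

theorem sum_sq_add_card_mul_prod_rpow_le_sq_sum (hx : ∀ i ∈ s, 0 ≤ x i) :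
    ∑ i ∈ s, x i ^ 2 + #s * (#s - 1) * (∏ i ∈ s, x i) ^ ((2 : ℝ) / #s) ≤ (∑ i ∈ s, x i) ^ 2 := by
  classical
  have hpair : ∀ p ∈ s.sigma s.erase, 0 ≤ x p.1 * x p.2 := fun p hp ↦ by
    simp only [mem_sigma, mem_erase] at hp
    exact mul_nonneg (hx _ hp.1) (hx _ hp.2.2)
  rw [sq_sum_eq_sum_sq_add_sum_sigma_erase, add_le_add_iff_left]
  rcases le_or_gt #s 1 with hs | hs
  · have : (#s : ℝ) * (#s - 1) = 0 := by
      interval_cases #s <;> simp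
    rw [this, zero_mul]
    exact sum_nonneg hpair
  · have hamgm := card_mul_prod_rpow_inv_card_le_sum _ _ hpair
    have hP : 0 ≤ ∏ i ∈ s, x i := prod_nonneg hx
    have hs' : (1 : ℝ) < #s := by exact_mod_cast hs
    rw [card_sigma_erase, prod_sigma_erase, ← Real.rpow_natCast, ← Real.rpow_mul hP] at hamgm
    convert hamgm using 3
    · push_cast [Nat.one_le_of_lt hs]
      ring
    · push_cast [Nat.one_le_of_lt hs]
      field_simp [(sub_pos.2 hs').ne']

/-- Kober's inequality. Adjoin a minimal element `t` to a set with sums `S`, `Q` of `xᵢ`, `xᵢ²` and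
geometric mean `g`: then `t ≤ g ≤ S / m`, so Cauchy–Schwarz for the `xᵢ - t` gives
`m (g - t)² ≤ ∑ (xᵢ - t)²`, which together with `Real.two_mul_mul_le_sq_add_rpow` closes the
induction. -/
theorem sq_sum_le_card_sub_one_mul_sum_sq_add (hx : ∀ i ∈ s, 0 ≤ x i) :
    (∑ i ∈ s, x i) ^ 2 ≤ (#s - 1) * ∑ i ∈ s, x i ^ 2 + #s * (∏ i ∈ s, x i) ^ ((2 : ℝ) / #s) := by
  classical
  induction s using Finset.induction_on_min_value x with
  | empty => simp
  | insert a s ha hmin ih =>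
    have hx' : ∀ i ∈ s, 0 ≤ x i := fun i hi ↦ hx i (mem_insert_of_mem hi)
    have ht : 0 ≤ x a := hx a (mem_insert_self a s)
    rw [sum_insert ha, sum_insert ha, prod_insert ha, card_insert_of_notMem ha]
    rcases s.eq_empty_or_nonempty with rfl | hs
    · norm_num
    set m := #s
    set t := x a
    set S := ∑ i ∈ s, x i
    set Q := ∑ i ∈ s, x i ^ 2
    set P := ∏ i ∈ s, x i
    set g := P ^ (m : ℝ)⁻¹
    have hm : 1 ≤ m := hs.card_pos
    have hm0 : (0 : ℝ) < m := by exact_mod_cast hm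
    have hP : 0 ≤ P := prod_nonneg hx'
    have hg : 0 ≤ g := by positivity
    have hgm : g ^ m = P := Real.rpow_inv_natCast_pow hP (by omega)
    have hg2 : P ^ ((2 : ℝ) / m) = g ^ 2 := by
      rw [← Real.rpow_natCast g, ← Real.rpow_mul hP]
      congr 1
      push_cast
      ring
    have htg : t ≤ g := by
      have : t ^ m ≤ P := by simpa using prod_le_prod (fun _ _ ↦ ht) hmin
      calc t = (t ^ m) ^ (m : ℝ)⁻¹ := (Real.pow_rpow_inv_natCast ht (by omega)).symm
        _ ≤ g := Real.rpow_le_rpow (by positivity) this (by positivity)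
    have hgS : m * g ≤ S := card_mul_prod_rpow_inv_card_le_sum s x hx'
    have hspread : m * (g - t) ^ 2 ≤ Q - 2 * t * S + m * t ^ 2 := by
      have hcs := sq_sum_le_card_mul_sum_sq (s := s) (f := fun i ↦ x i - t)
      simp only [sum_sub_distrib, sub_sq, sum_add_distrib, sum_const, nsmul_eq_mul, ← mul_sum,
        ← sum_mul] at hcs
      have : (m * (g - t)) ^ 2 ≤ (S - m * t) ^ 2 :=
        pow_le_pow_left₀ (mul_nonneg hm0.le (sub_nonneg.2 htg)) (by linarith) 2
      refine le_of_mul_le_mul_left ?_ hm0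
      linear_combination this + hcs
    have hamgm := Real.two_mul_mul_le_sq_add_rpow hm ht hg
    rw [hgm] at hamgm
    have ih := ih hx'
    rw [hg2] at ih
    push_cast
    linear_combination ih + hspread + hamgm

end Finset

theorem Matrix.IsHermitian.trace_mul_self_s10 {𝕜 n : Type*} [RCLike 𝕜] [Fintype n] [DecidableEq n]
    {A : Matrix n n 𝕜} (hA : A.IsHermitian) :
    (A * A).trace = ∑ i, ((hA.eigenvalues i ^ 2 : ℝ) : 𝕜) := by
  conv_lhs => rw [hA.spectral_theorem, ← map_mul]
  rw [Unitary.conjStarAlgAut_apply, Matrix.trace_mul_cycle, Unitary.coe_star_mul_self, one_mul,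
    Matrix.diagonal_mul_diagonal, Matrix.trace_diagonal]
  simp [sq]

namespace Matrix.IsHermitian

variable {n : Type*} [Fintype n] [DecidableEq n] {A : Matrix n n ℝ} (hA : A.IsHermitian)

theorem sum_sq_abs_eigenvalues : ∑ i, |hA.eigenvalues i| ^ 2 = (A * A).trace := by
  simp [hA.trace_mul_self_s10]

theorem prod_abs_eigenvalues : ∏ i, |hA.eigenvalues i| = |A.det| := by
  simp [hA.det_eq_prod_eigenvalues, abs_prod]

theorem sqrt_le_sum_abs_eigenvalues :
    √((A * A).trace +
        Fintype.card n * (Fintype.card n - 1) * |A.det| ^ ((2 : ℝ) / Fintype.card n)) ≤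
      ∑ i, |hA.eigenvalues i| := by
  have := sum_sq_add_card_mul_prod_rpow_le_sq_sum univ (fun i ↦ |hA.eigenvalues i|)
    (fun i _ ↦ abs_nonneg _)
  rw [hA.sum_sq_abs_eigenvalues, hA.prod_abs_eigenvalues, card_univ] at this
  exact Real.sqrt_le_iff.2 ⟨sum_nonneg fun i _ ↦ abs_nonneg _, this⟩

theorem sum_abs_eigenvalues_le_sqrt :
    ∑ i, |hA.eigenvalues i| ≤
      √((Fintype.card n - 1) * (A * A).trace +
        Fintype.card n * |A.det| ^ ((2 : ℝ) / Fintype.card n)) := by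
  have := sq_sum_le_card_sub_one_mul_sum_sq_add univ (fun i ↦ |hA.eigenvalues i|)
    (fun i _ ↦ abs_nonneg _)
  rw [hA.sum_sq_abs_eigenvalues, hA.prod_abs_eigenvalues, card_univ] at this
  exact Real.le_sqrt_of_sq_le this

end Matrix.IsHermitian

theorem SimpleGraph.sum_ite_adj_s10 {V : Type*} [Fintype V] (G : SimpleGraph V) (v : V) (c : ℝ) :
    ∑ w, (if G.Adj v w then c else 0) = G.degree v * c := by
  rw [← sum_filter, ← G.neighborFinset_eq_filter, sum_const, G.card_neighborFinset_eq_degree,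
    nsmul_eq_mul]

theorem somborMatrix_mul_self_apply {V : Type*} [Fintype V] (G : SimpleGraph V) (v w : V) :
    somborMatrix G v w * somborMatrix G w v =
      if G.Adj v w then (G.degree v : ℝ) ^ 2 + (G.degree w : ℝ) ^ 2 else 0 := by
  by_cases h : G.Adj v w
  · simp only [somborMatrix, h, h.symm, if_true, add_comm ((G.degree w : ℝ) ^ 2)]
    exact Real.mul_self_sqrt (by positivity)
  · simp [somborMatrix, h, G.adj_comm]

theorem trace_somborMatrix_mul_self {V : Type*} [Fintype V] (G : SimpleGraph V) :
    (somborMatrix G * somborMatrix G).trace = 2 * forgottenIndex G := by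
  have hswap : ∑ v, ∑ w, (if G.Adj v w then (G.degree w : ℝ) ^ 2 else 0) =
      ∑ v, ∑ w, (if G.Adj v w then (G.degree v : ℝ) ^ 2 else 0) := by
    rw [sum_comm]
    simp only [G.adj_comm]
  simp only [Matrix.trace, Matrix.diag_apply, Matrix.mul_apply, somborMatrix_mul_self_apply,
    ite_add_zero, sum_add_distrib, hswap, G.sum_ite_adj_s10, forgottenIndex, ← two_mul, ← pow_succ']

theorem stmt10 {n : ℕ} (G : SimpleGraph (Fin n)) :
    Real.sqrt (2 * forgottenIndex G +
        n * ((n : ℝ) - 1) * |(somborMatrix G).det| ^ ((2 : ℝ) / n)) ≤ somborEnergy G ∧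
    somborEnergy G ≤ Real.sqrt (2 * ((n : ℝ) - 1) * forgottenIndex G +
        n * |(somborMatrix G).det| ^ ((2 : ℝ) / n)) := by
  have hS := somborMatrix_isHermitian G
  have lower := hS.sqrt_le_sum_abs_eigenvalues
  have upper := hS.sum_abs_eigenvalues_le_sqrt
  rw [trace_somborMatrix_mul_self, Fintype.card_fin] at lower upper
  rw [mul_left_comm, ← mul_assoc] at upper
  exact ⟨lower, upper⟩
end

section
/- For the complete bipartite graph K_{s,t}, the Sombor energy equals 2√(s³t + st³). -/
open scoped Classical

/-!
The Sombor matrix `S` of `K_{s,t}` is `√(s² + t²)` times the adjacency matrix `A`, and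
`A³ = st • A`, so `S³ = k • S` with `k = st(s² + t²)`. Every eigenvalue `λ` of `S` then satisfies
`λ³ = kλ`, i.e. `λ ∈ {0, ±√k}`, whence `|λ| √k = λ²`. Summing, `√k · E(S) = tr S² = 2k`.
-/

theorem abs_mul_sqrt_eq_sq_of_pow_three_eq {x k : ℝ} (h : x ^ 3 = k * x) : |x| * √k = x ^ 2 := by
  rcases eq_or_ne x 0 with rfl | hx
  · simp
  · have hk : k = x ^ 2 := by
      apply mul_right_cancel₀ hx; linear_combination -h
    rw [hk, Real.sqrt_sq_eq_abs, ← sq, sq_abs]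

namespace Matrix.IsHermitian

variable {𝕜 n : Type*} [RCLike 𝕜] [Fintype n] [DecidableEq n] {A : Matrix n n 𝕜}

theorem trace_mul_self_eq_sum_sq_eigenvalues (hA : A.IsHermitian) :
    (A * A).trace = ∑ i, (hA.eigenvalues i : 𝕜) ^ 2 := by
  conv_lhs => rw [hA.spectral_theorem, ← map_mul, Unitary.conjStarAlgAut_apply,
    Matrix.trace_mul_cycle, Unitary.coe_star_mul_self, one_mul, diagonal_mul_diagonal,
    trace_diagonal]
  simp [sq]

theorem eigenvalues_pow_three_eq {k : ℝ} (hA : A.IsHermitian) (h : A * A * A = k • A) (i : n) :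
    hA.eigenvalues i ^ 3 = k * hA.eigenvalues i := by
  have hv := hA.mulVec_eigenvectorBasis i
  set v := ⇑(hA.eigenvectorBasis i)
  set l := hA.eigenvalues i
  have hv0 : v ≠ 0 := by
    simpa [v] using hA.eigenvectorBasis.orthonormal.ne_zero i
  have hcube : (l ^ 3 - k * l) • v = 0 := by
    have h3 := congrArg (· *ᵥ v) h
    simp only [← mulVec_mulVec, hv, mulVec_smul, smul_smul, smul_mulVec] at h3
    rw [sub_smul, ← h3]
    module
  exact sub_eq_zero.mp ((smul_eq_zero.mp hcube).resolve_right hv0)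

theorem sum_abs_eigenvalues_eq_div {k : ℝ} (hA : A.IsHermitian) (h : A * A * A = k • A) :
    ∑ i, |hA.eigenvalues i| = (∑ i, hA.eigenvalues i ^ 2) / √k := by
  have key i := abs_mul_sqrt_eq_sq_of_pow_three_eq (hA.eigenvalues_pow_three_eq h i)
  by_cases hk : √k = 0
  -- then `k ≤ 0`, which forces every eigenvalue to vanish, and both sides are `0` (`x / 0 = 0`)
  · have h0 i : hA.eigenvalues i = 0 := by
      simpa [hk] using (key i).symm
    simp [h0, hk]
  · rw [eq_div_iff hk, Finset.sum_mul]
    exact Finset.sum_congr rfl fun i _ => key i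

end Matrix.IsHermitian

namespace SimpleGraph

variable {V W : Type*} [Fintype V] [Fintype W]

theorem completeBipartiteGraph_degree_inl (v : V) :
    (completeBipartiteGraph V W).degree (Sum.inl v) = Fintype.card W := by
  rw [← card_neighborFinset_eq_degree, neighborFinset_eq_filter, Finset.card_filter,
    Fintype.sum_sum_type]
  simp

theorem completeBipartiteGraph_degree_inr (w : W) :
    (completeBipartiteGraph V W).degree (Sum.inr w) = Fintype.card V := by
  rw [← card_neighborFinset_eq_degree, neighborFinset_eq_filter, Finset.card_filter,
    Fintype.sum_sum_type]
  simp

variable {α : Type*} [NonAssocSemiring α]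

theorem trace_adjMatrix_completeBipartiteGraph_mul_self :
    ((completeBipartiteGraph V W).adjMatrix α * (completeBipartiteGraph V W).adjMatrix α).trace =
      2 * (Fintype.card V * Fintype.card W) := by
  simp only [Matrix.trace, Matrix.diag_apply, adjMatrix_mul_self_apply_self, Fintype.sum_sum_type,
    completeBipartiteGraph_degree_inl, completeBipartiteGraph_degree_inr, Finset.sum_const,
    Finset.card_univ, nsmul_eq_mul]
  rw [Nat.cast_comm, two_mul]

theorem adjMatrix_completeBipartiteGraph_mul_mul_self :
    (completeBipartiteGraph V W).adjMatrix α * (completeBipartiteGraph V W).adjMatrix α *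
        (completeBipartiteGraph V W).adjMatrix α =
      (Fintype.card V * Fintype.card W : α) • (completeBipartiteGraph V W).adjMatrix α := by
  ext (v | w) (v' | w') <;> simp [Matrix.mul_apply, Fintype.sum_sum_type]
  exact Nat.cast_comm _ _

end SimpleGraph

theorem somborEnergy_eq_trace_div_sqrt {V : Type*} [Fintype V] (G : SimpleGraph V) {k : ℝ}
    (h : somborMatrix G * somborMatrix G * somborMatrix G = k • somborMatrix G) :
    somborEnergy G = (somborMatrix G * somborMatrix G).trace / √k := by
  have hS := somborMatrix_isHermitian G
  rw [somborEnergy, somborEigs, hS.sum_abs_eigenvalues_eq_div h,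
    hS.trace_mul_self_eq_sum_sq_eigenvalues]
  simp

theorem somborMatrix_eq_smul_adjMatrix {V : Type*} [Fintype V] (G : SimpleGraph V) {c : ℝ}
    (hc : ∀ i j, G.Adj i j → (G.degree i : ℝ) ^ 2 + (G.degree j : ℝ) ^ 2 = c) :
    somborMatrix G = √c • G.adjMatrix ℝ := by
  ext i j
  by_cases hij : G.Adj i j <;> simp [somborMatrix, hij, hc]

section completeBipartiteGraph

open SimpleGraph

variable (V W : Type*) [Fintype V] [Fintype W]

theorem somborMatrix_completeBipartiteGraph :
    somborMatrix (completeBipartiteGraph V W) =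
      √((Fintype.card V : ℝ) ^ 2 + (Fintype.card W : ℝ) ^ 2) •
        (completeBipartiteGraph V W).adjMatrix ℝ := by
  refine somborMatrix_eq_smul_adjMatrix _ ?_
  rintro (v | w) (v' | w') hadj <;>
    simp_all [completeBipartiteGraph_degree_inl, completeBipartiteGraph_degree_inr, add_comm]

theorem somborMatrix_completeBipartiteGraph_mul_mul_self :
    somborMatrix (completeBipartiteGraph V W) * somborMatrix (completeBipartiteGraph V W) *
        somborMatrix (completeBipartiteGraph V W) =
      ((Fintype.card V : ℝ) ^ 3 * Fintype.card W + Fintype.card V * (Fintype.card W : ℝ) ^ 3) •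
        somborMatrix (completeBipartiteGraph V W) := by
  have hw := Real.sq_sqrt (by positivity :
    0 ≤ (Fintype.card V : ℝ) ^ 2 + (Fintype.card W : ℝ) ^ 2)
  rw [somborMatrix_completeBipartiteGraph, smul_mul_smul_comm, smul_mul_smul_comm,
    adjMatrix_completeBipartiteGraph_mul_mul_self, smul_smul, smul_smul]
  congr 1
  linear_combination
    ((Fintype.card V : ℝ) * Fintype.card W * √((Fintype.card V : ℝ) ^ 2 + Fintype.card W ^ 2)) * hw

theorem trace_somborMatrix_completeBipartiteGraph_mul_self :
    (somborMatrix (completeBipartiteGraph V W) * somborMatrix (completeBipartiteGraph V W)).trace =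
      2 * ((Fintype.card V : ℝ) ^ 3 * Fintype.card W +
        Fintype.card V * (Fintype.card W : ℝ) ^ 3) := by
  have hw := Real.sq_sqrt (by positivity :
    0 ≤ (Fintype.card V : ℝ) ^ 2 + (Fintype.card W : ℝ) ^ 2)
  rw [somborMatrix_completeBipartiteGraph, smul_mul_smul_comm, Matrix.trace_smul,
    trace_adjMatrix_completeBipartiteGraph_mul_self, smul_eq_mul, ← sq, hw]
  ring

theorem somborEnergy_completeBipartiteGraph :
    somborEnergy (completeBipartiteGraph V W) =
      2 * √((Fintype.card V : ℝ) ^ 3 * Fintype.card W +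
        Fintype.card V * (Fintype.card W : ℝ) ^ 3) := by
  rw [somborEnergy_eq_trace_div_sqrt _ (somborMatrix_completeBipartiteGraph_mul_mul_self V W),
    trace_somborMatrix_completeBipartiteGraph_mul_self, mul_div_assoc, Real.div_sqrt]

end completeBipartiteGraph

theorem stmt12 (s t : ℕ) :
    somborEnergy (completeBipartiteGraph (Fin s) (Fin t)) =
      2 * Real.sqrt ((s : ℝ) ^ 3 * t + (s : ℝ) * (t : ℝ) ^ 3) := by
  simpa using somborEnergy_completeBipartiteGraph (Fin s) (Fin t)
end

section
/- Let G be a non-trivial simple graph (with at least one edge). Then the Sombor energy satisfies E(G) ≥ √(tr(S²)³ / tr(S⁴)), where S = S(G) is the Sombor matrix. -/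
open scoped Classical

/-! With `λᵢ` the Sombor eigenvalues, `tr S^k = ∑ λᵢ^k`. The two Cauchy–Schwarz inequalities
`(∑ λᵢ²)² ≤ (∑ |λᵢ|)(∑ |λᵢ|³)` and `(∑ |λᵢ|³)² ≤ (∑ λᵢ²)(∑ λᵢ⁴)` combine to
`(∑ λᵢ²)³ ≤ E² · ∑ λᵢ⁴`. -/

open Finset Matrix

theorem Matrix.IsHermitian.trace_pow {𝕜 n : Type*} [RCLike 𝕜] [Fintype n] [DecidableEq n]
    {A : Matrix n n 𝕜} (hA : A.IsHermitian) (k : ℕ) :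
    (A ^ k).trace = ∑ i, (hA.eigenvalues i : 𝕜) ^ k := by
  conv_lhs => rw [hA.spectral_theorem, ← map_pow, Unitary.conjStarAlgAut_apply, trace_mul_cycle,
    Unitary.coe_star_mul_self, one_mul, diagonal_pow, trace_diagonal]
  simp

theorem Finset.sum_sq_pow_three_le_sq_sum_mul_sum_pow_four {ι R : Type*} [CommSemiring R]
    [LinearOrder R] [IsStrictOrderedRing R] [ExistsAddOfLE R] (s : Finset ι) {a : ι → R}
    (ha : ∀ i ∈ s, 0 ≤ a i) :
    (∑ i ∈ s, a i ^ 2) ^ 3 ≤ (∑ i ∈ s, a i) ^ 2 * ∑ i ∈ s, a i ^ 4 := by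
  set T₁ := ∑ i ∈ s, a i
  set T₂ := ∑ i ∈ s, a i ^ 2
  set T₃ := ∑ i ∈ s, a i ^ 3
  set T₄ := ∑ i ∈ s, a i ^ 4
  have h₁₃ : T₂ ^ 2 ≤ T₁ * T₃ :=
    sum_sq_le_sum_mul_sum_of_sq_le_mul s ha (fun i hi => pow_nonneg (ha i hi) 3)
      (fun i _ => le_of_eq (by ring))
  have h₂₄ : T₃ ^ 2 ≤ T₂ * T₄ :=
    sum_sq_le_sum_mul_sum_of_sq_le_mul s (fun i _ => sq_nonneg (a i))
      (fun i hi => pow_nonneg (ha i hi) 4) (fun i _ => le_of_eq (by ring))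
  have hT₂ : 0 ≤ T₂ := sum_nonneg fun i _ => sq_nonneg (a i)
  have h : T₂ * T₂ ^ 3 ≤ T₂ * (T₁ ^ 2 * T₄) :=
    calc T₂ * T₂ ^ 3 = (T₂ ^ 2) ^ 2 := by ring
      _ ≤ (T₁ * T₃) ^ 2 := pow_le_pow_left₀ (sq_nonneg T₂) h₁₃ 2
      _ = T₁ ^ 2 * T₃ ^ 2 := mul_pow T₁ T₃ 2
      _ ≤ T₁ ^ 2 * (T₂ * T₄) := mul_le_mul_of_nonneg_left h₂₄ (sq_nonneg T₁)
      _ = T₂ * (T₁ ^ 2 * T₄) := by ring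
  rcases hT₂.eq_or_lt with h₀ | hpos
  · rw [← h₀, zero_pow three_ne_zero]
    exact mul_nonneg (sq_nonneg T₁) (sum_nonneg fun i hi => pow_nonneg (ha i hi) 4)
  · exact le_of_mul_le_mul_left h hpos

/-- When `∑ aᵢ⁴ = 0` the left side is the junk value `√(x / 0) = 0`. -/
theorem Real.sqrt_sum_sq_pow_three_div_sum_pow_four_le_sum_abs {ι : Type*} (s : Finset ι)
    (a : ι → ℝ) :
    √((∑ i ∈ s, a i ^ 2) ^ 3 / ∑ i ∈ s, a i ^ 4) ≤ ∑ i ∈ s, |a i| := by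
  have h := sum_sq_pow_three_le_sq_sum_mul_sum_pow_four s (a := fun i => |a i|)
    (fun i _ => abs_nonneg (a i))
  simp only [sq_abs, Even.pow_abs (by decide : Even 4)] at h
  have hT₄ : 0 ≤ ∑ i ∈ s, a i ^ 4 := sum_nonneg fun i _ => Even.pow_nonneg (by decide) (a i)
  refine Real.sqrt_le_iff.mpr ⟨sum_nonneg fun i _ => abs_nonneg (a i), ?_⟩
  exact div_le_of_le_mul₀ hT₄ (sq_nonneg _) h

theorem stmt15_general {n : ℕ} (G : SimpleGraph (Fin n)) :
    Real.sqrt (((somborMatrix G ^ 2).trace) ^ 3 / (somborMatrix G ^ 4).trace) ≤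
      somborEnergy G := by
  have htrace (k : ℕ) : (somborMatrix G ^ k).trace = ∑ i, somborEigs G i ^ k :=
    (somborMatrix_isHermitian G).trace_pow k
  rw [htrace, htrace]
  exact Real.sqrt_sum_sq_pow_three_div_sum_pow_four_le_sum_abs univ (somborEigs G)

theorem stmt15 {n : ℕ} (G : SimpleGraph (Fin n)) (hne : G.edgeSet.Nonempty) :
    Real.sqrt (((somborMatrix G ^ 2).trace) ^ 3 / (somborMatrix G ^ 4).trace) ≤
      somborEnergy G :=
  stmt15_general G
end

section
/- Let a_1 ≥ a_2 ≥ ... ≥ a_n ≥ 0 be nonnegative real numbers. Then Σ a_i + n(n−1)(Π a_i)^{1/n} ≤ (Σ √a_i)² ≤ (n−1) Σ a_i + n(Π a_i)^{1/n}. -/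
open Finset Real
set_option maxHeartbeats 1000000

lemma my_amgm {n : ℕ} (hn : n ≠ 0) (f : Fin n → ℝ) (hf : ∀ i, 0 ≤ f i) :
    (n : ℝ) * (∏ i, f i) ^ ((1:ℝ)/n) ≤ ∑ i, f i := by
  have hn0 : (0:ℝ) < n := by exact_mod_cast Nat.pos_of_ne_zero hn
  have h := Real.geom_mean_le_arith_mean_weighted Finset.univ (fun _ => 1/(n:ℝ)) f
    (fun i _ => by positivity)
    (by simp [Finset.sum_const, Finset.card_univ]; field_simp)
    (fun i _ => hf i)
  rw [Real.finset_prod_rpow _ _ (fun i _ => hf i), ← Finset.mul_sum] at h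
  calc (n:ℝ) * (∏ i, f i) ^ ((1:ℝ)/n) ≤ (n:ℝ) * ((1/(n:ℝ)) * ∑ i, f i) := by
        nlinarith [h]
    _ = ∑ i, f i := by field_simp

lemma my_step (n : ℕ) (hn : 0 < n) (a : Fin (n+1) → ℝ) (ha : ∀ i, 0 ≤ a i)
    (hmono : ∀ i j : Fin (n+1), i ≤ j → a j ≤ a i)
    (IH : ∀ (a : Fin n → ℝ), (∀ i, 0 ≤ a i) → (∀ i j : Fin n, i ≤ j → a j ≤ a i) →
      (∑ i, a i) + (n : ℝ) * ((n : ℝ) - 1) * (∏ i, a i) ^ ((1 : ℝ) / n) ≤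
        (∑ i, Real.sqrt (a i)) ^ 2 ∧
      (∑ i, Real.sqrt (a i)) ^ 2 ≤
        ((n : ℝ) - 1) * (∑ i, a i) + (n : ℝ) * (∏ i, a i) ^ ((1 : ℝ) / n)) :
    (∑ i, a i) + ((n+1 : ℕ) : ℝ) * (((n+1:ℕ) : ℝ) - 1) * (∏ i, a i) ^ ((1 : ℝ) / (n+1:ℕ)) ≤
      (∑ i, Real.sqrt (a i)) ^ 2 ∧
    (∑ i, Real.sqrt (a i)) ^ 2 ≤
      (((n+1:ℕ) : ℝ) - 1) * (∑ i, a i) + ((n+1:ℕ) : ℝ) * (∏ i, a i) ^ ((1 : ℝ) / (n+1:ℕ)) := by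
  have hn0 : (0:ℝ) < n := by exact_mod_cast hn
  set a' : Fin n → ℝ := fun i => a i.castSucc with ha'def
  have ha' : ∀ i, 0 ≤ a' i := fun i => ha _
  have hmono' : ∀ i j : Fin n, i ≤ j → a' j ≤ a' i := fun i j hij =>
    hmono _ _ (by simpa using hij)
  set x : ℝ := a (Fin.last n) with hxdef
  have hx : 0 ≤ x := ha _
  have hxle : ∀ i : Fin n, x ≤ a' i := fun i => hmono _ _ (Fin.le_last _)
  set S : ℝ := ∑ i, a' i with hSdef
  set T : ℝ := ∑ i, Real.sqrt (a' i) with hTdef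
  set P : ℝ := ∏ i, a' i with hPdef
  have hS : 0 ≤ S := Finset.sum_nonneg fun i _ => ha' i
  have hT : 0 ≤ T := Finset.sum_nonneg fun i _ => Real.sqrt_nonneg _
  have hP : 0 ≤ P := Finset.prod_nonneg fun i _ => ha' i
  set H : ℝ := P ^ ((1:ℝ)/n) with hHdef
  have hH : 0 ≤ H := Real.rpow_nonneg hP _
  set G : ℝ := (P * x) ^ ((1:ℝ)/((n:ℝ)+1)) with hGdef
  have hG : 0 ≤ G := Real.rpow_nonneg (mul_nonneg hP hx) _
  -- rewrite goal
  rw [Fin.sum_univ_castSucc (f := a), Fin.sum_univ_castSucc (f := fun i => Real.sqrt (a i)),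
    Fin.prod_univ_castSucc (f := a)]
  push_cast
  have e1 : ∑ i : Fin n, a i.castSucc = S := rfl
  have e2 : ∏ i : Fin n, a i.castSucc = P := rfl
  have e3 : ∑ i : Fin n, Real.sqrt (a i.castSucc) = T := rfl
  rw [e1, e2, e3, ← hxdef, ← hGdef]
  obtain ⟨IHl, IHr⟩ := IH a' ha' hmono'
  rw [← hSdef, ← hTdef, ← hPdef, ← hHdef] at IHl IHr
  have hn' : (n:ℝ) ≠ 0 := hn0.ne'
  have hnn : (0:ℝ) ≤ (n:ℝ) := hn0.le
  have hn1 : (0:ℝ) < (n:ℝ)+1 := by positivity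
  have hn1' : ((n:ℝ)+1) ≠ 0 := hn1.ne'
  have hone : (1:ℝ) ≤ (n:ℝ) := by exact_mod_cast hn
  -- x ≤ H
  have hxn : x ^ n ≤ P := by
    calc x ^ n = ∏ _i : Fin n, x := by
          rw [Finset.prod_const, Finset.card_univ, Fintype.card_fin]
      _ ≤ P := Finset.prod_le_prod (fun i _ => hx) (fun i _ => hxle i)
  have f3 : x ≤ H := by
    have h := Real.rpow_le_rpow (by positivity) hxn (by positivity : (0:ℝ) ≤ 1/(n:ℝ))
    rwa [← Real.rpow_natCast x n, ← Real.rpow_mul hx, mul_one_div, div_self hn',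
      Real.rpow_one] at h
  -- n*H ≤ S
  have f4 : (n:ℝ) * H ≤ S := my_amgm hn.ne' a' ha'
  -- √H = P^(1/(2n))
  have sqrtH : Real.sqrt H = P ^ ((1:ℝ)/(2*(n:ℝ))) := by
    rw [Real.sqrt_eq_rpow, hHdef, ← Real.rpow_mul hP]
    congr 1
    field_simp
  -- n*√H ≤ T
  have f6 : (n:ℝ) * Real.sqrt H ≤ T := by
    have h := my_amgm hn.ne' (fun i => Real.sqrt (a' i)) (fun i => Real.sqrt_nonneg _)
    have e : (∏ i, Real.sqrt (a' i)) ^ ((1:ℝ)/(n:ℝ)) = Real.sqrt H := by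
      simp_rw [Real.sqrt_eq_rpow]
      rw [Real.finset_prod_rpow _ _ (fun i _ => ha' i), hHdef, ← Real.rpow_mul hP,
        ← Real.rpow_mul hP]
      congr 1
      ring
    rw [e] at h
    exact h
  -- Cauchy : T ≤ √(n*S)
  have hc : T ^ 2 ≤ (n:ℝ) * S := by
    have h := sq_sum_le_card_mul_sum_sq (s := (Finset.univ : Finset (Fin n)))
      (f := fun i => Real.sqrt (a' i))
    have e : ∑ i, (Real.sqrt (a' i))^2 = S := Finset.sum_congr rfl fun i _ => Real.sq_sqrt (ha' i)
    simpa [e, Finset.card_univ] using h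
  have f5 : T ≤ Real.sqrt ((n:ℝ) * S) := by
    rw [← Real.sqrt_sq hT]
    exact Real.sqrt_le_sqrt hc
  -- left AM-GM
  have hamgmL : ((n:ℝ)+1) * G ≤ ((n:ℝ)-1) * H + 2 * (Real.sqrt H * Real.sqrt x) := by
    have w1 : (0:ℝ) ≤ ((n:ℝ)-1)/((n:ℝ)+1) := by
      apply div_nonneg <;> linarith
    have h := Real.geom_mean_le_arith_mean2_weighted w1
      (by positivity : (0:ℝ) ≤ 2/((n:ℝ)+1)) hH
      (mul_nonneg (Real.sqrt_nonneg H) (Real.sqrt_nonneg x)) (by field_simp; ring)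
    have e : H ^ (((n:ℝ)-1)/((n:ℝ)+1)) * (Real.sqrt H * Real.sqrt x) ^ ((2:ℝ)/((n:ℝ)+1)) = G := by
      calc H ^ (((n:ℝ)-1)/((n:ℝ)+1)) * (Real.sqrt H * Real.sqrt x) ^ ((2:ℝ)/((n:ℝ)+1))
          = H ^ (((n:ℝ)-1)/((n:ℝ)+1)) * (H*x) ^ ((1:ℝ)/((n:ℝ)+1)) := by
            rw [← Real.sqrt_mul hH, Real.sqrt_eq_rpow, ← Real.rpow_mul (mul_nonneg hH hx),
              show (1/2) * ((2:ℝ)/((n:ℝ)+1)) = 1/((n:ℝ)+1) by ring]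
        _ = H ^ (((n:ℝ)-1)/((n:ℝ)+1)) * (H ^ ((1:ℝ)/((n:ℝ)+1)) * x ^ ((1:ℝ)/((n:ℝ)+1))) := by
            rw [Real.mul_rpow hH hx]
        _ = H ^ (((n:ℝ)-1)/((n:ℝ)+1) + (1:ℝ)/((n:ℝ)+1)) * x ^ ((1:ℝ)/((n:ℝ)+1)) := by
            rw [Real.rpow_add' hH (by
              rw [show ((n:ℝ)-1)/((n:ℝ)+1) + (1:ℝ)/((n:ℝ)+1) = (n:ℝ)/((n:ℝ)+1) by ring]
              positivity)]
            ring
        _ = P ^ ((1:ℝ)/((n:ℝ)+1)) * x ^ ((1:ℝ)/((n:ℝ)+1)) := by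
            rw [show ((n:ℝ)-1)/((n:ℝ)+1) + (1:ℝ)/((n:ℝ)+1) = (n:ℝ)/((n:ℝ)+1) by ring,
              hHdef, ← Real.rpow_mul hP, show (1/(n:ℝ)) * ((n:ℝ)/((n:ℝ)+1)) = 1/((n:ℝ)+1) by
                field_simp]
        _ = G := by rw [hGdef, Real.mul_rpow hP hx]
    rw [e] at h
    have h2 := mul_le_mul_of_nonneg_left h hn1.le
    calc ((n:ℝ)+1) * G ≤ ((n:ℝ)+1) * (((n:ℝ)-1)/((n:ℝ)+1) * H
          + 2/((n:ℝ)+1) * (Real.sqrt H * Real.sqrt x)) := h2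
      _ = ((n:ℝ)-1) * H + 2 * (Real.sqrt H * Real.sqrt x) := by field_simp
  -- right AM-GM
  have hamgmR : 2*(n:ℝ) * (Real.sqrt H * Real.sqrt x) ≤ ((n:ℝ)-1) * x + ((n:ℝ)+1) * G := by
    have w1 : (0:ℝ) ≤ ((n:ℝ)-1)/(2*(n:ℝ)) := by
      apply div_nonneg <;> linarith
    have h := Real.geom_mean_le_arith_mean2_weighted w1
      (by positivity : (0:ℝ) ≤ ((n:ℝ)+1)/(2*(n:ℝ))) hx hG (by field_simp; ring)
    have e : x ^ (((n:ℝ)-1)/(2*(n:ℝ))) * G ^ (((n:ℝ)+1)/(2*(n:ℝ))) = Real.sqrt H * Real.sqrt x := by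
      calc x ^ (((n:ℝ)-1)/(2*(n:ℝ))) * G ^ (((n:ℝ)+1)/(2*(n:ℝ)))
          = x ^ (((n:ℝ)-1)/(2*(n:ℝ))) * (P*x) ^ ((1/((n:ℝ)+1)) * (((n:ℝ)+1)/(2*(n:ℝ)))) := by
            rw [hGdef, ← Real.rpow_mul (mul_nonneg hP hx)]
        _ = x ^ (((n:ℝ)-1)/(2*(n:ℝ))) * (P ^ ((1:ℝ)/(2*(n:ℝ))) * x ^ ((1:ℝ)/(2*(n:ℝ)))) := by
            rw [show (1/((n:ℝ)+1)) * (((n:ℝ)+1)/(2*(n:ℝ))) = (1:ℝ)/(2*(n:ℝ)) by field_simp,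
              Real.mul_rpow hP hx]
        _ = P ^ ((1:ℝ)/(2*(n:ℝ))) * x ^ (((n:ℝ)-1)/(2*(n:ℝ)) + (1:ℝ)/(2*(n:ℝ))) := by
            rw [Real.rpow_add' hx (by
              rw [show ((n:ℝ)-1)/(2*(n:ℝ)) + (1:ℝ)/(2*(n:ℝ)) = (1:ℝ)/2 by field_simp; ring]
              norm_num)]
            ring
        _ = Real.sqrt H * Real.sqrt x := by
            rw [← sqrtH, show ((n:ℝ)-1)/(2*(n:ℝ)) + (1:ℝ)/(2*(n:ℝ)) = (1:ℝ)/2 by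
              field_simp; ring, ← Real.sqrt_eq_rpow]
    rw [e] at h
    have h2 := mul_le_mul_of_nonneg_left h (by positivity : (0:ℝ) ≤ 2*(n:ℝ))
    calc 2*(n:ℝ) * (Real.sqrt H * Real.sqrt x)
        ≤ 2*(n:ℝ) * (((n:ℝ)-1)/(2*(n:ℝ)) * x + ((n:ℝ)+1)/(2*(n:ℝ)) * G) := h2
      _ = ((n:ℝ)-1) * x + ((n:ℝ)+1) * G := by field_simp
  -- monotonicity key
  have hkey : (n:ℝ)*H - 2*(Real.sqrt ((n:ℝ)*x)*Real.sqrt ((n:ℝ)*H))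
      ≤ S - 2*(Real.sqrt ((n:ℝ)*x)*Real.sqrt S) := by
    have h1 : Real.sqrt ((n:ℝ)*x) ≤ Real.sqrt ((n:ℝ)*H) :=
      Real.sqrt_le_sqrt (mul_le_mul_of_nonneg_left f3 hnn)
    have h2 : Real.sqrt ((n:ℝ)*H) ≤ Real.sqrt S := Real.sqrt_le_sqrt (by linarith)
    have q := mul_nonneg (sub_nonneg.2 h2)
      (show (0:ℝ) ≤ Real.sqrt S + Real.sqrt ((n:ℝ)*H) - 2*Real.sqrt ((n:ℝ)*x) by linarith)
    have eS : Real.sqrt S * Real.sqrt S = S := Real.mul_self_sqrt hS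
    have eH : Real.sqrt ((n:ℝ)*H) * Real.sqrt ((n:ℝ)*H) = (n:ℝ)*H :=
      Real.mul_self_sqrt (by positivity)
    nlinarith [q, eS, eH]
  have e_b : Real.sqrt ((n:ℝ)*x) * Real.sqrt ((n:ℝ)*H) = (n:ℝ) * (Real.sqrt H * Real.sqrt x) := by
    rw [Real.sqrt_mul hnn, Real.sqrt_mul hnn]
    have hs := Real.mul_self_sqrt hnn
    linear_combination (Real.sqrt x * Real.sqrt H) * hs
  have e_a : Real.sqrt ((n:ℝ)*S) * Real.sqrt x = Real.sqrt ((n:ℝ)*x) * Real.sqrt S := by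
    rw [Real.sqrt_mul hnn, Real.sqrt_mul hnn]
    ring
  have hexp : (T + Real.sqrt x)^2 = T^2 + 2*(T*Real.sqrt x) + x := by
    rw [add_sq, Real.sq_sqrt hx]
    ring
  constructor
  · -- left inequality
    have ht1 : (n:ℝ) * Real.sqrt H * Real.sqrt x ≤ T * Real.sqrt x :=
      mul_le_mul_of_nonneg_right f6 (Real.sqrt_nonneg x)
    have hL2 : (n:ℝ)*(((n:ℝ)+1)*G) ≤ (n:ℝ)*(((n:ℝ)-1) * H + 2 * (Real.sqrt H * Real.sqrt x)) :=
      mul_le_mul_of_nonneg_left hamgmL hnn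
    nlinarith [IHl, hL2, ht1, hexp]
  · -- right inequality
    have ht2 : T * Real.sqrt x ≤ Real.sqrt ((n:ℝ)*S) * Real.sqrt x :=
      mul_le_mul_of_nonneg_right f5 (Real.sqrt_nonneg x)
    rw [e_a] at ht2
    rw [e_b] at hkey
    nlinarith [IHr, ht2, hkey, hamgmR, hexp]


lemma my_aux (n : ℕ) (a : Fin n → ℝ) (ha : ∀ i, 0 ≤ a i)
    (hmono : ∀ i j : Fin n, i ≤ j → a j ≤ a i) :
    (∑ i, a i) + (n : ℝ) * ((n : ℝ) - 1) * (∏ i, a i) ^ ((1 : ℝ) / n) ≤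
      (∑ i, Real.sqrt (a i)) ^ 2 ∧
    (∑ i, Real.sqrt (a i)) ^ 2 ≤
      ((n : ℝ) - 1) * (∑ i, a i) + (n : ℝ) * (∏ i, a i) ^ ((1 : ℝ) / n) := by
  induction n with
  | zero => simp
  | succ n IH =>
    rcases Nat.eq_zero_or_pos n with hn | hn
    · subst hn
      have h0 := ha 0
      simp [Fin.sum_univ_one, Fin.prod_univ_one, Real.sq_sqrt h0, Real.rpow_one]
    · exact my_step n hn a ha hmono (fun a' ha' hm' => IH a' ha' hm')

theorem stmt16 {n : ℕ} (a : Fin n → ℝ) (ha : ∀ i, 0 ≤ a i)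
    (hmono : ∀ i j : Fin n, i ≤ j → a j ≤ a i) :
    (∑ i, a i) + (n : ℝ) * ((n : ℝ) - 1) * (∏ i, a i) ^ ((1 : ℝ) / n) ≤
      (∑ i, Real.sqrt (a i)) ^ 2 ∧
    (∑ i, Real.sqrt (a i)) ^ 2 ≤
      ((n : ℝ) - 1) * (∑ i, a i) + (n : ℝ) * (∏ i, a i) ^ ((1 : ℝ) / n) := by
  exact my_aux n a ha hmono
end
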